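/- arXiv:1603.09409 — 6 statements merged into one kernel-verified Lean document; each statement's English description precedes it below -/
import Mathlib

section
/- Let p be a prime and let (B_j)_{j∈ℕ}, B_j = B(a_j, p^{−n_j}), be a sequence of pairwise disjoint closed balls in ℚ_p with ∑_j p^{−n_j} < ∞, with metric boundary β = ⋃_j S(a_j, p^{−n_j}) and thick inner ε-neighborhoods N_ε. Then μ_H(β) = (1 − p^{−1}) · ∑_j p^{−n_j}, and μ_H(N_ε) tends to (1 − p^{−1}) · ∑_j p^{−n_j} as ε → 0⁺. -/
/-!
Multiplication by `p` scales any Haar measure of `ℚ_p` by a constant `Δ(p)` (`distribHaarChar`).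
Since `ℤ_p` is the disjoint union of the `p` translates `i + pℤ_p`, `i < p`, and `pℤ_p = p • ℤ_p`,
we get `Δ(p) = p⁻¹`, hence `μ_H(B(c, p^n)) = p^n`. In `ℚ_p` the open ball of radius `p^n` is the
closed ball of radius `p^(n-1)`, so `μ_H(S(c, p^n)) = (1 - p⁻¹) p^n`, and `β` is a disjoint union
of such spheres.

The sets `N_ε` decrease as `ε ↓ 0` inside `⋃ B_j`, which has finite measure, so `μ_H(N_ε)` tends
to the measure of `⋂_{ε > 0} N_ε`. That intersection is `β`: in an ultrametric space a point of the
open ball `B(a_j, r_j)°` is at distance at least `r_j` from every point outside it, and `β` misses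
that open ball by disjointness.
-/

open MeasureTheory

noncomputable instance padicMeasurableSpace (p : ℕ) [Fact p.Prime] : MeasurableSpace ℚ_[p] :=
  borel _

instance padicBorelSpace (p : ℕ) [Fact p.Prime] : BorelSpace ℚ_[p] := ⟨rfl⟩

/-- The closed unit ball `ℤ_p = {x : ℚ_p | |x|_p ≤ 1}` of `ℚ_p`, as a positive compact set. -/
noncomputable def padicUnitBall (p : ℕ) [Fact p.Prime] :
    TopologicalSpace.PositiveCompacts ℚ_[p] where
  carrier := Metric.closedBall 0 1
  isCompact' := isCompact_closedBall 0 1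
  interior_nonempty' :=
    ⟨0, mem_interior_iff_mem_nhds.mpr (Metric.closedBall_mem_nhds 0 one_pos)⟩

/-- The Haar measure `μ_H` on the additive group `ℚ_p`, normalized so that
`μ_H(ℤ_p) = 1`. -/
noncomputable def padicHaar (p : ℕ) [Fact p.Prime] : Measure ℚ_[p] :=
  Measure.addHaarMeasure (padicUnitBall p)

open Metric Filter Topology Set Function
open scoped ENNReal NNReal Pointwise

section MetricBoundary

variable {X ι : Type*} [PseudoMetricSpace X]

def metricBoundary (a : ι → X) (r : ι → ℝ) : Set X :=
  ⋃ i, sphere (a i) (r i)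

def thickInnerNbhd (a : ι → X) (r : ι → ℝ) (ε : ℝ) : Set X :=
  {x ∈ ⋃ i, closedBall (a i) (r i) | infDist x (metricBoundary a r) < ε}

variable {a : ι → X} {r : ι → ℝ}

lemma disjoint_ball_metricBoundary
    (hdisj : Pairwise (Disjoint on fun i => closedBall (a i) (r i)))
    (j : ι) : Disjoint (ball (a j) (r j)) (metricBoundary a r) := by
  refine disjoint_iUnion_right.2 fun i => ?_
  obtain rfl | hij := eq_or_ne j i
  · exact sphere_disjoint_ball.symm
  · exact (hdisj hij).mono ball_subset_closedBall sphere_subset_closedBall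

lemma IsUltrametricDist.le_dist_of_mem_ball_of_notMem_ball [IsUltrametricDist X] {c x y : X}
    {ρ : ℝ} (hx : x ∈ ball c ρ) (hy : y ∉ ball c ρ) : ρ ≤ dist x y := by
  rw [IsUltrametricDist.ball_eq_of_mem hx, mem_ball, not_lt] at hy
  rwa [dist_comm]

lemma biInter_thickInnerNbhd_eq_metricBoundary [IsUltrametricDist X]
    (hdisj : Pairwise (Disjoint on fun i => closedBall (a i) (r i)))
    (hne : (metricBoundary a r).Nonempty) :
    ⋂ ε > 0, thickInnerNbhd a r ε = metricBoundary a r := by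
  ext x
  simp only [mem_iInter, thickInnerNbhd, mem_sep_iff]
  constructor
  · intro hx
    obtain ⟨j, hxj⟩ := mem_iUnion.1 (hx 1 one_pos).1
    rcases (mem_closedBall.1 hxj).eq_or_lt with hsphere | hball
    · exact mem_iUnion.2 ⟨j, hsphere⟩
    have hfar : r j ≤ infDist x (metricBoundary a r) :=
      (le_infDist hne).2 fun y hy =>
        IsUltrametricDist.le_dist_of_mem_ball_of_notMem_ball hball
          (disjoint_right.1 (disjoint_ball_metricBoundary hdisj j) hy)
    exact absurd (hx (r j) (dist_nonneg.trans_lt hball)).2 hfar.not_gt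
  · intro hx ε hε
    obtain ⟨j, hxj⟩ := mem_iUnion.1 hx
    exact ⟨mem_iUnion.2 ⟨j, sphere_subset_closedBall hxj⟩, (infDist_zero_of_mem hx).trans_lt hε⟩

lemma tendsto_measure_thickInnerNbhd [IsUltrametricDist X] [Countable ι] [MeasurableSpace X]
    [OpensMeasurableSpace X] (μ : Measure X)
    (hdisj : Pairwise (Disjoint on fun i => closedBall (a i) (r i)))
    (hne : (metricBoundary a r).Nonempty) (hfin : μ (⋃ i, closedBall (a i) (r i)) ≠ ∞) :
    Tendsto (fun ε => μ (thickInnerNbhd a r ε)) (𝓝[>] 0) (𝓝 (μ (metricBoundary a r))) := by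
  have hmeas : ∀ ε, MeasurableSet (thickInnerNbhd a r ε) := fun ε =>
    (MeasurableSet.iUnion fun i => measurableSet_closedBall).inter
      (measurableSet_lt (continuous_infDist_pt _).measurable measurable_const)
  have hmono : ∀ ε δ, 0 < ε → ε ≤ δ → thickInnerNbhd a r ε ⊆ thickInnerNbhd a r δ :=
    fun _ _ _ hεδ _ hx => ⟨hx.1, hx.2.trans_le hεδ⟩
  have h := tendsto_measure_biInter_gt (μ := μ) (fun ε _ => (hmeas ε).nullMeasurableSet)
    hmono ⟨1, one_pos, ne_top_of_le_ne_top hfin (measure_mono (sep_subset _ _))⟩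
  rwa [biInter_thickInnerNbhd_eq_metricBoundary hdisj hne] at h

end MetricBoundary

namespace Padic

variable {p : ℕ} [hp : Fact p.Prime]

lemma ball_zpow_eq_closedBall (c : ℚ_[p]) (n : ℤ) :
    ball c ((p : ℝ) ^ n) = closedBall c ((p : ℝ) ^ (n - 1)) := by
  ext x
  simp only [mem_ball, mem_closedBall, dist_eq_norm, norm_lt_pow_iff_norm_le_pow_sub_one]

lemma closedBall_one_eq_biUnion :
    closedBall (0 : ℚ_[p]) 1 = ⋃ i ∈ Finset.range p, closedBall (i : ℚ_[p]) (p : ℝ)⁻¹ := by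
  have hball (c : ℚ_[p]) : ball c 1 = closedBall c (p : ℝ)⁻¹ := by
    simpa using ball_zpow_eq_closedBall (p := p) c 0
  ext x
  simp only [mem_iUnion, Finset.mem_range, exists_prop]
  constructor
  · intro hx
    obtain ⟨z, rfl⟩ : ∃ z : ℤ_[p], (z : ℚ_[p]) = x := ⟨⟨x, by simpa using hx⟩, rfl⟩
    obtain ⟨i, hip, hi⟩ := PadicInt.exists_mem_range z
    refine ⟨i, hip, ?_⟩
    rw [← hball, mem_ball, dist_eq_norm, ← PadicInt.coe_natCast, ← PadicInt.coe_sub,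
      ← PadicInt.norm_def]
    exact PadicInt.mem_nonunits.1 hi
  · rintro ⟨i, -, hx⟩
    have hi : (i : ℚ_[p]) ∈ closedBall 0 1 := by
      simpa using norm_int_le_one (p := p) i
    rw [IsUltrametricDist.closedBall_eq_of_mem hi]
    refine closedBall_subset_closedBall (inv_le_one_of_one_le₀ ?_) hx
    exact_mod_cast hp.out.one_le

lemma pairwiseDisjoint_closedBall_natCast :
    (Finset.range p : Set ℕ).PairwiseDisjoint fun i => closedBall (i : ℚ_[p]) (p : ℝ)⁻¹ := by
  intro i hi j hj hij
  refine disjoint_left.2 fun x hxi hxj => hij ?_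
  have hdist : ‖((i - j : ℤ) : ℚ_[p])‖ < 1 := by
    calc ‖((i - j : ℤ) : ℚ_[p])‖ = dist (i : ℚ_[p]) j := by push_cast; rw [dist_eq_norm]
      _ ≤ max (dist (i : ℚ_[p]) x) (dist x j) := dist_triangle_max _ _ _
      _ ≤ (p : ℝ)⁻¹ := max_le (dist_comm x (i : ℚ_[p]) ▸ hxi) hxj
      _ < 1 := inv_lt_one_of_one_lt₀ (by exact_mod_cast hp.out.one_lt)
  have hlt : |(i - j : ℤ)| < p := by
    simp only [Finset.coe_range, mem_Iio] at hi hj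
    rw [abs_lt]; omega
  have := Int.eq_zero_of_abs_lt_dvd (norm_intCast_lt_one_iff.1 hdist) hlt
  omega

end Padic

section PadicHaar

variable {p : ℕ} [hp : Fact p.Prime]

instance : (padicHaar p).IsAddHaarMeasure := by
  unfold padicHaar; infer_instance

instance : (padicHaar p).Regular := by
  unfold padicHaar; infer_instance

lemma padicHaar_closedBall_zero_one : padicHaar p (closedBall 0 1) = 1 :=
  Measure.addHaarMeasure_self (K₀ := padicUnitBall p)

lemma padicHaar_closedBall_zero_inv : padicHaar p (closedBall 0 (p : ℝ)⁻¹) = (p : ℝ≥0∞)⁻¹ := by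
  have h := congrArg (padicHaar p) (Padic.closedBall_one_eq_biUnion (p := p))
  rw [padicHaar_closedBall_zero_one, measure_biUnion_finset
    Padic.pairwiseDisjoint_closedBall_natCast fun _ _ => measurableSet_closedBall] at h
  simp only [Measure.addHaar_closedBall_center, Finset.sum_const, Finset.card_range,
    nsmul_eq_mul] at h
  exact ENNReal.eq_inv_of_mul_eq_one_left (by rw [mul_comm, h])

lemma distribHaarChar_padic_p :
    distribHaarChar ℚ_[p] (Units.mk0 (p : ℚ_[p]) (NeZero.ne _)) = (p : ℝ≥0)⁻¹ := by
  refine distribHaarChar_eq_of_measure_smul_eq_mul (μ := padicHaar p) (s := closedBall 0 1)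
    (by simp [padicHaar_closedBall_zero_one]) (by simp [padicHaar_closedBall_zero_one]) ?_
  rw [Units.smul_def, Units.val_mk0, _root_.smul_closedBall _ _ zero_le_one, smul_zero,
    Padic.norm_p, mul_one, padicHaar_closedBall_zero_inv, padicHaar_closedBall_zero_one, mul_one]
  simp

lemma padicHaar_closedBall (c : ℚ_[p]) (n : ℤ) :
    padicHaar p (closedBall c ((p : ℝ) ^ n)) = ENNReal.ofReal ((p : ℝ) ^ n) := by
  have hscale : (Units.mk0 (p : ℚ_[p]) (NeZero.ne _) ^ (-n)) • closedBall (0 : ℚ_[p]) 1 =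
      closedBall 0 ((p : ℝ) ^ n) := by
    rw [Units.smul_def, _root_.smul_closedBall _ _ zero_le_one, smul_zero,
      Units.val_zpow_eq_zpow_val, Units.val_mk0, Padic.norm_p_zpow, neg_neg, mul_one]
  rw [Measure.addHaar_closedBall_center, ← hscale, ← distribHaarChar_mul, map_zpow,
    distribHaarChar_padic_p, padicHaar_closedBall_zero_one, mul_one, inv_zpow', neg_neg,
    ← ENNReal.ofReal_coe_nnreal, NNReal.coe_zpow, NNReal.coe_natCast]

lemma padicHaar_sphere (c : ℚ_[p]) (n : ℤ) :
    padicHaar p (sphere c ((p : ℝ) ^ n)) = ENNReal.ofReal ((1 - (p : ℝ)⁻¹) * (p : ℝ) ^ n) := by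
  rw [← closedBall_sdiff_ball, measure_sdiff ball_subset_closedBall
    measurableSet_ball.nullMeasurableSet measure_ball_lt_top.ne, Padic.ball_zpow_eq_closedBall,
    padicHaar_closedBall, padicHaar_closedBall, ← ENNReal.ofReal_sub _ (by positivity),
    zpow_sub_one₀ (Nat.cast_ne_zero.2 hp.out.ne_zero)]
  ring_nf

variable {ι : Type*} [Countable ι] {a : ι → ℚ_[p]} {m : ι → ℤ}

lemma padicHaar_metricBoundary
    (hdisj : Pairwise (Disjoint on fun i => closedBall (a i) ((p : ℝ) ^ m i)))
    (hsum : Summable fun i => (p : ℝ) ^ m i) :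
    padicHaar p (metricBoundary a fun i => (p : ℝ) ^ m i) =
      ENNReal.ofReal ((1 - (p : ℝ)⁻¹) * ∑' i, (p : ℝ) ^ m i) := by
  have hcoeff : 0 ≤ 1 - (p : ℝ)⁻¹ :=
    sub_nonneg.2 (inv_le_one_of_one_le₀ (by exact_mod_cast hp.out.one_le))
  rw [metricBoundary, measure_iUnion (fun i j hij => (hdisj hij).mono sphere_subset_closedBall
    sphere_subset_closedBall) fun i => isClosed_sphere.measurableSet, ← tsum_mul_left,
    ENNReal.ofReal_tsum_of_nonneg (fun i => by positivity) (hsum.mul_left _)]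
  simp only [padicHaar_sphere]

lemma padicHaar_iUnion_closedBall_ne_top (hsum : Summable fun i => (p : ℝ) ^ m i) :
    padicHaar p (⋃ i, closedBall (a i) ((p : ℝ) ^ m i)) ≠ ∞ := by
  refine ((measure_iUnion_le _).trans_lt ?_).ne
  simp only [padicHaar_closedBall, ← ENNReal.ofReal_tsum_of_nonneg (fun _ => by positivity) hsum]
  exact ENNReal.ofReal_lt_top

end PadicHaar

open Filter in
/-- For a p-adic fractal string given by pairwise disjoint closed balls
`B_j = B(a_j, p^{-n_j})` with summable lengths, the metric boundary
`β = ⋃_j S(a_j, p^{-n_j})` has Haar measure `(1 - p⁻¹) · ∑_j p^{-n_j}`, and the measure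
of the thick inner ε-neighborhood `N_ε` tends to `(1 - p⁻¹) · ∑_j p^{-n_j}` as `ε → 0⁺`. -/
theorem padic_haar_metric_boundary (p : ℕ) [Fact p.Prime]
    (a : ℕ → ℚ_[p]) (n : ℕ → ℤ)
    (hdisj : Pairwise fun i j =>
      Disjoint (Metric.closedBall (a i) ((p : ℝ) ^ (-n i)))
        (Metric.closedBall (a j) ((p : ℝ) ^ (-n j))))
    (hsum : Summable fun j => (p : ℝ) ^ (-n j)) :
    padicHaar p (⋃ j, Metric.sphere (a j) ((p : ℝ) ^ (-n j)))
        = ENNReal.ofReal ((1 - (p : ℝ)⁻¹) * ∑' j, (p : ℝ) ^ (-n j))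
      ∧ Tendsto
          (fun ε : ℝ => padicHaar p
            {x ∈ ⋃ j, Metric.closedBall (a j) ((p : ℝ) ^ (-n j)) |
              Metric.infDist x (⋃ j, Metric.sphere (a j) ((p : ℝ) ^ (-n j))) < ε})
          (nhdsWithin 0 (Set.Ioi 0))
          (nhds (ENNReal.ofReal ((1 - (p : ℝ)⁻¹) * ∑' j, (p : ℝ) ^ (-n j)))) := by
  have hβ := padicHaar_metricBoundary (m := fun j => -n j) hdisj hsum
  refine ⟨hβ, hβ ▸ tendsto_measure_thickInnerNbhd (padicHaar p) hdisj ?_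
    (padicHaar_iUnion_closedBall_ne_top (m := fun j => -n j) hsum)⟩
  exact ⟨a 0 + (p : ℚ_[p]) ^ n 0, mem_iUnion.2 ⟨0, by simp⟩⟩
end

section
/- Let p be a prime and let (B_j)_{j∈ℕ}, B_j = B(a_j, p^{−n_j}), be a sequence of pairwise disjoint closed balls in ℚ_p with ∑_j p^{−n_j} < ∞, with metric boundary β = ⋃_j S(a_j, p^{−n_j}) and thick inner ε-neighborhoods N_ε. Then the volume of the thin inner ε-neighborhood satisfies, for every ε > 0: V(ε) := μ_H(N_ε \ β) = p^{−1} · ∑_{j : p^{−n_j} < ε} p^{−n_j}. -/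
open MeasureTheory

/-!
In an ultrametric space, a point `x` of the open ball `B°(a_j, r_j)` is at distance exactly `r_j`
from the boundary `β`: the points of `S(a_j, r_j)` are at distance `r_j`, and a point of `β` closer
than `r_j` would lie in `B°(a_j, r_j)`, which the disjointness of the closed balls keeps away from
`β`. Hence `N_ε \ β` is the disjoint union of the open balls `B°(a_j, r_j)` with `r_j < ε`.
In `ℚ_p` we have `B°(c, p^k) = B(c, p^(k-1))`, and splitting `B(0, p^(k+1))` into its `p` residue
classes gives `μ_H(B(c, p^k)) = p^k` by induction from `μ_H(ℤ_p) = 1`.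
-/

open Metric Function
open scoped ENNReal

section Ultrametric

variable {X ι : Type*} [PseudoMetricSpace X]

theorem disjoint_ball_iUnion_sphere {a : ι → X} {r : ι → ℝ}
    (hdisj : Pairwise (Disjoint on fun i => closedBall (a i) (r i))) (j : ι) :
    Disjoint (ball (a j) (r j)) (⋃ i, sphere (a i) (r i)) := by
  refine Set.disjoint_iUnion_right.2 fun i => ?_
  rcases eq_or_ne j i with rfl | hji
  · exact sphere_disjoint_ball.symm
  · exact (hdisj hji).mono ball_subset_closedBall sphere_subset_closedBall

variable [IsUltrametricDist X]

theorem IsUltrametricDist.le_dist_of_mem_ball_of_notMem {c x y : X} {r : ℝ}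
    (hx : x ∈ ball c r) (hy : y ∉ ball c r) : r ≤ dist x y := by
  by_contra! h
  exact hy (IsUltrametricDist.ball_eq_of_mem hx ▸ mem_ball'.2 h)

theorem infDist_iUnion_sphere_eq {a : ι → X} {r : ι → ℝ}
    (hdisj : Pairwise (Disjoint on fun i => closedBall (a i) (r i))) {j : ι}
    (hj : (sphere (a j) (r j)).Nonempty) {x : X} (hx : x ∈ ball (a j) (r j)) :
    infDist x (⋃ i, sphere (a i) (r i)) = r j := by
  obtain ⟨y, hy⟩ := hj
  refine le_antisymm ?_ ?_
  · calc infDist x (⋃ i, sphere (a i) (r i))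
        ≤ dist x y := infDist_le_dist_of_mem (Set.mem_iUnion.2 ⟨j, hy⟩)
      _ ≤ max (dist x (a j)) (dist (a j) y) := IsUltrametricDist.dist_triangle_max _ _ _
      _ = r j := by
        rw [dist_comm (a j), mem_sphere.1 hy, max_eq_right (mem_ball.1 hx).le]
  · refine (le_infDist ⟨y, Set.mem_iUnion.2 ⟨j, hy⟩⟩).2 fun z hz => ?_
    exact IsUltrametricDist.le_dist_of_mem_ball_of_notMem hx
      (Set.disjoint_right.1 (disjoint_ball_iUnion_sphere hdisj j) hz)

theorem thin_inner_tube_eq_iUnion_ball {a : ι → X} {r : ι → ℝ}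
    (hdisj : Pairwise (Disjoint on fun i => closedBall (a i) (r i)))
    (hsphere : ∀ i, (sphere (a i) (r i)).Nonempty) (ε : ℝ) :
    {x ∈ ⋃ i, closedBall (a i) (r i) | infDist x (⋃ i, sphere (a i) (r i)) < ε}
        \ ⋃ i, sphere (a i) (r i) =
      ⋃ i : {i // r i < ε}, ball (a i) (r i) := by
  ext x
  simp only [Set.mem_sdiff, Set.mem_ofPred_eq, Set.mem_iUnion, Subtype.exists, exists_prop]
  constructor
  · rintro ⟨⟨⟨i, hxi⟩, hdist⟩, hβ⟩
    have hx : x ∈ ball (a i) (r i) :=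
      (mem_closedBall.1 hxi).lt_of_ne fun h => hβ ⟨i, mem_sphere.2 h⟩
    exact ⟨i, infDist_iUnion_sphere_eq hdisj (hsphere i) hx ▸ hdist, hx⟩
  · rintro ⟨i, hε, hx⟩
    refine ⟨⟨⟨i, ball_subset_closedBall hx⟩, ?_⟩, ?_⟩
    · rwa [infDist_iUnion_sphere_eq hdisj (hsphere i) hx]
    · exact fun hβ => Set.disjoint_left.1 (disjoint_ball_iUnion_sphere hdisj i) hx
        (Set.mem_iUnion.2 hβ)

end Ultrametric

namespace Padic

variable {p : ℕ} [Fact p.Prime]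

theorem sphere_zpow_nonempty (c : ℚ_[p]) (k : ℤ) : (sphere c ((p : ℝ) ^ k)).Nonempty :=
  ⟨c + (p : ℚ_[p]) ^ (-k), by simp⟩

theorem exists_norm_sub_natCast_lt_one {y : ℚ_[p]} (hy : ‖y‖ ≤ 1) :
    ∃ d : Fin p, ‖y - (d : ℕ)‖ < 1 := by
  obtain ⟨d, hdp, hd⟩ := PadicInt.exists_mem_range ⟨y, hy⟩
  rw [IsLocalRing.mem_maximalIdeal, PadicInt.mem_nonunits] at hd
  exact ⟨⟨d, hdp⟩, hd⟩

theorem norm_natCast_sub_natCast_eq_one {d d' : Fin p} (h : d ≠ d') :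
    ‖((d : ℕ) : ℚ_[p]) - (d' : ℕ)‖ = 1 := by
  have hcast : ((d : ℕ) : ℚ_[p]) - (d' : ℕ) = (((d : ℤ) - d' : ℤ) : ℚ_[p]) := by
    push_cast; ring
  rw [hcast]
  refine (norm_int_le_one _).antisymm (not_lt.1 fun hlt => h ?_)
  have hzero := Int.eq_zero_of_abs_lt_dvd (norm_intCast_lt_one_iff.1 hlt) (by
    rw [abs_lt]; constructor <;> omega)
  omega

theorem closedBall_norm_eq_iUnion_ball {u : ℚ_[p]} (hu : u ≠ 0) :
    closedBall (0 : ℚ_[p]) ‖u‖ = ⋃ d : Fin p, ball ((d : ℕ) * u) ‖u‖ := by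
  ext x
  simp only [mem_closedBall_zero_iff, Set.mem_iUnion, mem_ball, dist_eq_norm]
  constructor
  · intro hx
    obtain ⟨d, hd⟩ := exists_norm_sub_natCast_lt_one (y := x / u) (by
      rwa [norm_div, div_le_one (norm_pos_iff.2 hu)])
    refine ⟨d, ?_⟩
    calc ‖x - (d : ℕ) * u‖ = ‖x / u - (d : ℕ)‖ * ‖u‖ := by
          rw [← norm_mul, sub_mul, div_mul_cancel₀ _ hu]
      _ < ‖u‖ := mul_lt_of_lt_one_left (norm_pos_iff.2 hu) hd
  · rintro ⟨d, hd⟩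
    calc ‖x‖ = ‖(x - (d : ℕ) * u) + (d : ℕ) * u‖ := by rw [sub_add_cancel]
      _ ≤ max ‖x - (d : ℕ) * u‖ ‖(d : ℕ) * u‖ := IsUltrametricDist.norm_add_le_max _ _
      _ ≤ ‖u‖ := max_le hd.le (by
          rw [norm_mul]
          exact mul_le_of_le_one_left (norm_nonneg _) (IsUltrametricDist.norm_natCast_le_one _ _))

theorem pairwise_disjoint_ball_natCast_mul (u : ℚ_[p]) :
    Pairwise (Disjoint on fun d : Fin p => ball ((d : ℕ) * u) ‖u‖) := by
  intro d d' h
  refine Set.disjoint_left.2 fun x hx hx' => (lt_irrefl ‖u‖) ?_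
  calc ‖u‖ = dist ((d : ℕ) * u) ((d' : ℕ) * u) := by
        rw [dist_eq_norm, ← sub_mul, norm_mul, norm_natCast_sub_natCast_eq_one h, one_mul]
    _ ≤ max (dist ((d : ℕ) * u) x) (dist x ((d' : ℕ) * u)) :=
        IsUltrametricDist.dist_triangle_max _ _ _
    _ < ‖u‖ := max_lt (mem_ball'.1 hx) (mem_ball.1 hx')

theorem ball_zpow_eq_closedBall_zpow_sub_one (c : ℚ_[p]) (k : ℤ) :
    ball c ((p : ℝ) ^ k) = closedBall c ((p : ℝ) ^ (k - 1)) := by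
  ext x
  simpa [dist_eq_norm] using norm_lt_pow_iff_norm_le_pow_sub_one (x - c) k

end Padic

section PadicHaar

open Padic

variable {p : ℕ} [Fact p.Prime]

instance inst_s4 : (padicHaar p).IsAddHaarMeasure := by
  unfold padicHaar; infer_instance

theorem padicHaar_closedBall_zpow_add_one (k : ℤ) :
    padicHaar p (closedBall 0 ((p : ℝ) ^ (k + 1))) =
      p * padicHaar p (closedBall 0 ((p : ℝ) ^ k)) := by
  have hu : (p : ℚ_[p]) ^ (-(k + 1)) ≠ 0 :=
    zpow_ne_zero _ (Nat.cast_ne_zero.2 (Fact.out : p.Prime).ne_zero)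
  have hball : ball (0 : ℚ_[p]) ((p : ℝ) ^ (k + 1)) = closedBall 0 ((p : ℝ) ^ k) := by
    rw [ball_zpow_eq_closedBall_zpow_sub_one, add_sub_cancel_right]
  rw [← neg_neg (k + 1), ← norm_p_zpow, closedBall_norm_eq_iUnion_ball hu,
    measure_iUnion (pairwise_disjoint_ball_natCast_mul _) fun _ => measurableSet_ball]
  simp only [Measure.addHaar_ball_center (padicHaar p), norm_p_zpow, neg_neg, hball,
    tsum_fintype, Finset.sum_const, Finset.card_univ, Fintype.card_fin, nsmul_eq_mul]

theorem padicHaar_closedBall_zpow (c : ℚ_[p]) (k : ℤ) :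
    padicHaar p (closedBall c ((p : ℝ) ^ k)) = ENNReal.ofReal ((p : ℝ) ^ k) := by
  rw [Measure.addHaar_closedBall_center]
  have hp : p ≠ 0 := (Fact.out : p.Prime).ne_zero
  have hofReal (k : ℤ) :
      ENNReal.ofReal ((p : ℝ) ^ (k + 1)) = p * ENNReal.ofReal ((p : ℝ) ^ k) := by
    rw [zpow_add_one₀ (Nat.cast_ne_zero.2 hp), mul_comm, ENNReal.ofReal_mul (by positivity),
      ENNReal.ofReal_natCast]
  induction k using Int.induction_on with
  | zero =>
    rw [zpow_zero, ENNReal.ofReal_one]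
    exact Measure.addHaarMeasure_self (K₀ := padicUnitBall p)
  | succ k ih => rw [padicHaar_closedBall_zpow_add_one, ih, hofReal]
  | pred k ih =>
    rw [← sub_add_cancel (-(k : ℤ)) 1, padicHaar_closedBall_zpow_add_one, hofReal] at ih
    exact (ENNReal.mul_right_inj (Nat.cast_ne_zero.2 hp) (ENNReal.natCast_ne_top p)).1 ih

theorem padicHaar_ball_zpow (c : ℚ_[p]) (k : ℤ) :
    padicHaar p (ball c ((p : ℝ) ^ k)) = ENNReal.ofReal ((p : ℝ) ^ (k - 1)) := by
  rw [ball_zpow_eq_closedBall_zpow_sub_one, padicHaar_closedBall_zpow]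

end PadicHaar

theorem padic_volume_thin_inner_tube_general (p : ℕ) [Fact p.Prime]
    (a : ℕ → ℚ_[p]) (n : ℕ → ℤ)
    (hdisj : Pairwise fun i j =>
      Disjoint (Metric.closedBall (a i) ((p : ℝ) ^ (-n i)))
        (Metric.closedBall (a j) ((p : ℝ) ^ (-n j))))
    (hsum : Summable fun j => (p : ℝ) ^ (-n j))
    (ε : ℝ) :
    padicHaar p
        ({x ∈ ⋃ j, Metric.closedBall (a j) ((p : ℝ) ^ (-n j)) |
            Metric.infDist x (⋃ j, Metric.sphere (a j) ((p : ℝ) ^ (-n j))) < ε}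
          \ ⋃ j, Metric.sphere (a j) ((p : ℝ) ^ (-n j)))
      = ENNReal.ofReal
          ((p : ℝ)⁻¹ * ∑' j : {j : ℕ // (p : ℝ) ^ (-n j) < ε}, (p : ℝ) ^ (-n j.1)) := by
  have hp : (p : ℝ) ≠ 0 := Nat.cast_ne_zero.2 (Fact.out : p.Prime).ne_zero
  have hsum' : Summable fun j : {j : ℕ // (p : ℝ) ^ (-n j) < ε} =>
      (p : ℝ)⁻¹ * (p : ℝ) ^ (-n j.1) :=
    (hsum.subtype _).mul_left _
  rw [thin_inner_tube_eq_iUnion_ball hdisj (fun j => Padic.sphere_zpow_nonempty _ _) ε,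
    measure_iUnion (fun i j hij => (hdisj (Subtype.coe_injective.ne hij)).mono
      ball_subset_closedBall ball_subset_closedBall) fun _ => measurableSet_ball,
    ← tsum_mul_left, ENNReal.ofReal_tsum_of_nonneg (fun _ => by positivity) hsum']
  refine tsum_congr fun j => ?_
  rw [padicHaar_ball_zpow, zpow_sub_one₀ hp, mul_comm]

/-- For a p-adic fractal string given by pairwise disjoint closed balls
`B_j = B(a_j, p^{-n_j})` with summable lengths, metric boundary `β` and thick inner
ε-neighborhoods `N_ε`, the volume of the thin inner ε-neighborhood satisfies
`V(ε) = μ_H(N_ε \ β) = p⁻¹ · ∑_{j : p^{-n_j} < ε} p^{-n_j}` for every `ε > 0`. -/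
theorem padic_volume_thin_inner_tube (p : ℕ) [Fact p.Prime]
    (a : ℕ → ℚ_[p]) (n : ℕ → ℤ)
    (hdisj : Pairwise fun i j =>
      Disjoint (Metric.closedBall (a i) ((p : ℝ) ^ (-n i)))
        (Metric.closedBall (a j) ((p : ℝ) ^ (-n j))))
    (hsum : Summable fun j => (p : ℝ) ^ (-n j))
    (ε : ℝ) (hε : 0 < ε) :
    padicHaar p
        ({x ∈ ⋃ j, Metric.closedBall (a j) ((p : ℝ) ^ (-n j)) |
            Metric.infDist x (⋃ j, Metric.sphere (a j) ((p : ℝ) ^ (-n j))) < ε}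
          \ ⋃ j, Metric.sphere (a j) ((p : ℝ) ^ (-n j)))
      = ENNReal.ofReal
          ((p : ℝ)⁻¹ * ∑' j : {j : ℕ // (p : ℝ) ^ (-n j) < ε}, (p : ℝ) ^ (-n j.1)) :=
  padic_volume_thin_inner_tube_general p a n hdisj hsum ε
end

section
/- Let (l_j)_{j≥1} be a nonincreasing sequence of positive real numbers with ∑_{j=1}^∞ l_j < ∞, and set W(ε) = ∑_{j : l_j ≤ ε} l_j for ε > 0. Define the abscissa of convergence σ = inf{ α ∈ ℝ : ∑_{j=1}^∞ l_j^α < ∞ } and the Minkowski dimension D_M = inf{ α ≥ 0 : W(ε) = O(ε^{1−α}) as ε → 0⁺ }. Then σ = D_M. -/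
open Finset Filter

lemma key_summable (l : ℕ → ℝ) (hpos : ∀ j, 0 < l j)
    (hl0 : Tendsto l atTop (nhds 0))
    (α C ε₀ : ℝ) (hα : 0 ≤ α) (hC : 0 < C) (hε₀ : 0 < ε₀)
    (hWb : ∀ ε : ℝ, 0 < ε → ε < ε₀ → ∀ G : Finset ℕ, (∀ j ∈ G, l j ≤ ε) →
      ∑ j ∈ G, l j ≤ C * ε ^ (1 - α))
    (β : ℝ) (hβ : α < β) : Summable fun j => l j ^ β := by
  have hβ0 : 0 < β := lt_of_le_of_lt hα hβ
  set ε₁ : ℝ := ε₀ / 2 with hε₁def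
  have hε₁ : 0 < ε₁ := by positivity
  have hε₁' : ε₁ < ε₀ := by rw [hε₁def]; linarith
  set u : ℕ → ℝ := fun k => ε₁ * (2⁻¹ : ℝ) ^ k with hudef
  have hu_pos : ∀ k, 0 < u k := fun k => by positivity
  have hu_lt : ∀ k, u k < ε₀ := by
    intro k
    have h1 : (2⁻¹ : ℝ) ^ k ≤ 1 := pow_le_one₀ (by norm_num) (by norm_num)
    calc u k ≤ ε₁ * 1 := mul_le_mul_of_nonneg_left h1 hε₁.le
      _ = ε₁ := mul_one _
      _ < ε₀ := hε₁'
  have hu_succ : ∀ k, u (k + 1) = u k * 2⁻¹ := by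
    intro k; simp [hudef, pow_succ]; ring
  -- N beyond which l j < ε₁
  obtain ⟨N, hN⟩ : ∃ N, ∀ j ≥ N, l j < ε₁ :=
    eventually_atTop.mp (hl0.eventually (eventually_lt_nhds hε₁))
  -- shell index
  have hex : ∀ j, l j < ε₁ → ∃ k, u (k + 1) < l j := by
    intro j hj
    obtain ⟨n, hn⟩ := exists_pow_lt_of_lt_one (x := l j / ε₁) (y := (2⁻¹ : ℝ))
      (div_pos (hpos j) hε₁) (by norm_num)
    have hun : u n < l j := by
      have h2 := (lt_div_iff₀ hε₁).mp hn
      have : u n = (2⁻¹:ℝ)^n * ε₁ := by rw [hudef]; ring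
      linarith
    match n, hun with
    | 0, h0 => exact absurd h0 (not_lt.mpr (by simp [hudef]; linarith))
    | (m+1), hm => exact ⟨m, hm⟩
  classical
  let κ : ℕ → ℕ := fun j => if h : l j < ε₁ then Nat.find (hex j h) else 0
  have hκ1 : ∀ j, l j < ε₁ → u (κ j + 1) < l j := by
    intro j hj
    simp only [κ, dif_pos hj]
    exact Nat.find_spec (hex j hj)
  have hκ2 : ∀ j, l j < ε₁ → l j ≤ u (κ j) := by
    intro j hj
    simp only [κ, dif_pos hj]
    rcases Nat.eq_zero_or_pos (Nat.find (hex j hj)) with h0 | hpos'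
    · rw [h0]; simp only [hudef, pow_zero, mul_one]; exact hj.le
    · obtain ⟨m, hm⟩ := Nat.exists_eq_succ_of_ne_zero hpos'.ne'
      rw [hm]
      have := Nat.find_min (hex j hj) (m := m) (by omega)
      exact not_lt.mp this
  set r : ℝ := (2⁻¹ : ℝ) ^ (β - α) with hrdef
  have hr0 : 0 ≤ r := Real.rpow_nonneg (by norm_num) _
  have hr1 : r < 1 := Real.rpow_lt_one (by norm_num) (by norm_num) (by linarith)
  set A : ℝ := 2 * C * ε₁ ^ (β - α) with hAdef
  have hA0 : 0 ≤ A := by positivity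
  -- term bound
  have htb : ∀ j, l j < ε₁ → l j ^ β ≤ 2 * u (κ j) ^ (β - 1) * l j := by
    intro j hj
    have hrw : l j ^ β = l j ^ (β - 1) * l j := by
      rw [← Real.rpow_add_one (hpos j).ne' (β - 1)]
      ring_nf
    rw [hrw]
    have hb : l j ^ (β - 1) ≤ 2 * u (κ j) ^ (β - 1) := by
      rcases le_or_gt 1 β with h1 | h1
      · have h2 : l j ^ (β - 1) ≤ u (κ j) ^ (β - 1) :=
          Real.rpow_le_rpow (hpos j).le (hκ2 j hj) (by linarith)
        have h3 : (0:ℝ) ≤ u (κ j) ^ (β - 1) := Real.rpow_nonneg (hu_pos _).le _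
        linarith
      · have h2 : l j ^ (β - 1) ≤ u (κ j + 1) ^ (β - 1) :=
          Real.rpow_le_rpow_of_nonpos (hu_pos _) (hκ1 j hj).le (by linarith)
        have h3 : u (κ j + 1) ^ (β - 1) = u (κ j) ^ (β - 1) * (2⁻¹:ℝ) ^ (β - 1) := by
          rw [hu_succ, Real.mul_rpow (hu_pos _).le (by norm_num)]
        have h4 : (2⁻¹:ℝ) ^ (β - 1) ≤ 2 := by
          have : (2⁻¹:ℝ) ^ (β - 1) = (2:ℝ) ^ (1 - β) := by
            rw [Real.inv_rpow (by norm_num), ← Real.rpow_neg (by norm_num)]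
            ring_nf
          rw [this]
          calc (2:ℝ) ^ (1 - β) ≤ (2:ℝ) ^ (1:ℝ) :=
                Real.rpow_le_rpow_of_exponent_le one_le_two (by linarith)
            _ = 2 := Real.rpow_one 2
        have h5 : (0:ℝ) ≤ u (κ j) ^ (β - 1) := Real.rpow_nonneg (hu_pos _).le _
        calc l j ^ (β - 1) ≤ u (κ j) ^ (β - 1) * (2⁻¹:ℝ) ^ (β - 1) := by rw [← h3]; exact h2
          _ ≤ u (κ j) ^ (β - 1) * 2 := mul_le_mul_of_nonneg_left h4 h5
          _ = 2 * u (κ j) ^ (β - 1) := by ring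
    exact mul_le_mul_of_nonneg_right hb (hpos j).le
  -- (u k)^(β-α) in geometric form
  have hru : ∀ k : ℕ, u k ^ (β - α) = ε₁ ^ (β - α) * r ^ k := by
    intro k
    rw [hudef]
    simp only
    rw [Real.mul_rpow hε₁.le (by positivity)]
    congr 1
    rw [← Real.rpow_natCast (2⁻¹:ℝ) k, ← Real.rpow_mul (by norm_num), mul_comm,
      Real.rpow_mul (by norm_num), Real.rpow_natCast]
  -- shell bound
  have hshell : ∀ (k : ℕ) (G : Finset ℕ), (∀ j ∈ G, l j < ε₁ ∧ κ j = k) →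
      ∑ j ∈ G, l j ^ β ≤ A * r ^ k := by
    intro k G hG
    have hsum1 : ∑ j ∈ G, l j ^ β ≤ ∑ j ∈ G, 2 * u k ^ (β - 1) * l j := by
      apply Finset.sum_le_sum
      intro j hj
      have := htb j (hG j hj).1
      rwa [(hG j hj).2] at this
    have hsum2 : ∑ j ∈ G, 2 * u k ^ (β - 1) * l j = 2 * u k ^ (β - 1) * ∑ j ∈ G, l j := by
      rw [Finset.mul_sum]
    have hsum3 : ∑ j ∈ G, l j ≤ C * u k ^ (1 - α) := by
      apply hWb (u k) (hu_pos k) (hu_lt k) G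
      intro j hj
      have h := hκ2 j (hG j hj).1
      rwa [(hG j hj).2] at h
    have hnn : (0:ℝ) ≤ 2 * u k ^ (β - 1) := by positivity
    calc ∑ j ∈ G, l j ^ β ≤ 2 * u k ^ (β - 1) * ∑ j ∈ G, l j := by
          rw [← hsum2] at *; linarith
      _ ≤ 2 * u k ^ (β - 1) * (C * u k ^ (1 - α)) := mul_le_mul_of_nonneg_left hsum3 hnn
      _ = 2 * C * (u k ^ (β - 1) * u k ^ (1 - α)) := by ring
      _ = 2 * C * u k ^ (β - α) := by
          rw [← Real.rpow_add (hu_pos k)]; ring_nf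
      _ = A * r ^ k := by rw [hru k, hAdef]; ring
  -- partial sum bound
  have hbound : ∀ n, ∑ j ∈ range n, l j ^ β ≤ (∑ j ∈ range N, l j ^ β) + A * (1 - r)⁻¹ := by
    intro n
    rw [← Finset.sum_filter_add_sum_filter_not (range n) (fun j => l j < ε₁)]
    have hS1 : ∑ j ∈ (range n).filter (fun j => ¬ l j < ε₁), l j ^ β
        ≤ ∑ j ∈ range N, l j ^ β := by
      apply Finset.sum_le_sum_of_subset_of_nonneg
      · intro j hj
        rw [Finset.mem_filter] at hj
        rw [Finset.mem_range]
        by_contra h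
        exact hj.2 (hN j (by omega))
      · intro j _ _
        exact Real.rpow_nonneg (hpos j).le _
    have hS2 : ∑ j ∈ (range n).filter (fun j => l j < ε₁), l j ^ β ≤ A * (1 - r)⁻¹ := by
      set S2 := (range n).filter (fun j => l j < ε₁) with hS2def
      set M := S2.sup κ + 1 with hMdef
      have hmaps : ∀ j ∈ S2, κ j ∈ range M := by
        intro j hj
        rw [Finset.mem_range, hMdef]
        exact Nat.lt_succ_of_le (Finset.le_sup hj)
      rw [← Finset.sum_fiberwise_of_maps_to hmaps (fun j => l j ^ β)]
      have hstep : ∀ k ∈ range M, ∑ j ∈ S2.filter (fun j => κ j = k), l j ^ β ≤ A * r ^ k := by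
        intro k _
        apply hshell
        intro j hj
        rw [Finset.mem_filter] at hj
        rw [hS2def, Finset.mem_filter] at hj
        exact ⟨hj.1.2, hj.2⟩
      calc ∑ k ∈ range M, ∑ j ∈ S2.filter (fun j => κ j = k), l j ^ β
          ≤ ∑ k ∈ range M, A * r ^ k := Finset.sum_le_sum hstep
        _ = A * ∑ k ∈ range M, r ^ k := by rw [Finset.mul_sum]
        _ ≤ A * (1 - r)⁻¹ := by
            apply mul_le_mul_of_nonneg_left _ hA0
            calc ∑ k ∈ range M, r ^ k ≤ ∑' k : ℕ, r ^ k :=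
                  Summable.sum_le_tsum _ (fun k _ => pow_nonneg hr0 k)
                    (summable_geometric_of_lt_one hr0 hr1)
              _ = (1 - r)⁻¹ := tsum_geometric_of_lt_one hr0 hr1
    linarith
  exact summable_of_sum_range_le (fun n => Real.rpow_nonneg (hpos n).le _) hbound

/-- Let `(l_j)` be a nonincreasing summable sequence of positive reals and
`W(ε) = ∑_{j : l_j ≤ ε} l_j`. Then the abscissa of convergence
`σ = inf {α : ∑_j l_j^α < ∞}` equals the Minkowski dimension
`D_M = inf {α ≥ 0 : W(ε) = O(ε^{1-α}) as ε → 0⁺}`. -/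
theorem abscissa_eq_minkowski_dimension (l : ℕ → ℝ) (hpos : ∀ j, 0 < l j)
    (hmono : Antitone l) (hsum : Summable l)
    (W : ℝ → ℝ) (hW : ∀ ε : ℝ, W ε = ∑' j : {j : ℕ // l j ≤ ε}, l j.1) :
    sInf {α : ℝ | Summable fun j => l j ^ α}
      = sInf {α : ℝ | 0 ≤ α ∧
          ∃ C > (0 : ℝ), ∃ ε₀ > (0 : ℝ), ∀ ε : ℝ, 0 < ε → ε < ε₀ → W ε ≤ C * ε ^ (1 - α)} := by
  have hl0 : Filter.Tendsto l Filter.atTop (nhds 0) := hsum.tendsto_atTop_zero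
  set S := {α : ℝ | Summable fun j => l j ^ α} with hSdef
  set T := {α : ℝ | 0 ≤ α ∧
      ∃ C > (0 : ℝ), ∃ ε₀ > (0 : ℝ), ∀ ε : ℝ, 0 < ε → ε < ε₀ → W ε ≤ C * ε ^ (1 - α)} with hTdef
  set L : ℝ := ∑' j, l j with hLdef
  have hL : 0 < L := Summable.tsum_pos hsum (fun j => (hpos j).le) 0 (hpos 0)
  -- W ε ≤ L
  have hWle : ∀ ε : ℝ, W ε ≤ L := by
    intro ε
    rw [hW ε]
    exact Summable.tsum_subtype_le l {j | l j ≤ ε} (fun j => (hpos j).le) hsum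
  -- finite sums are below W ε
  have hfin : ∀ ε : ℝ, ∀ G : Finset ℕ, (∀ j ∈ G, l j ≤ ε) → ∑ j ∈ G, l j ≤ W ε := by
    intro ε G hG
    rw [hW ε]
    have h1 : ∑ j ∈ G, l j = ∑ j ∈ G, Set.indicator {j | l j ≤ ε} l j := by
      apply Finset.sum_congr rfl
      intro j hj
      exact (Set.indicator_of_mem (show j ∈ {j | l j ≤ ε} from hG j hj) l).symm
    rw [h1]
    calc ∑ j ∈ G, Set.indicator {j | l j ≤ ε} l j
        ≤ ∑' j, Set.indicator {j | l j ≤ ε} l j :=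
          Summable.sum_le_tsum G (fun j _ => Set.indicator_nonneg (fun i _ => (hpos i).le) j)
            (hsum.indicator _)
      _ = ∑' j : {j : ℕ // l j ≤ ε}, l j.1 := (tsum_subtype {j | l j ≤ ε} l).symm
  -- every element of S is positive
  have hSpos : ∀ α ∈ S, 0 < α := by
    intro α hα
    by_contra h
    push_neg at h
    have h1 : ∀ᶠ j in Filter.atTop, l j < 1 :=
      hl0.eventually (eventually_lt_nhds one_pos)
    have h2 : ∀ᶠ j in Filter.atTop, l j ^ α < 1 :=
      hα.tendsto_atTop_zero.eventually (eventually_lt_nhds one_pos)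
    obtain ⟨j, hj1, hj2⟩ := (h1.and h2).exists
    have : (1:ℝ) ≤ l j ^ α := by
      have := Real.rpow_le_rpow_of_exponent_ge (hpos j) hj1.le h
      simpa using this
    linarith
  have hSbdd : BddBelow S := ⟨0, fun α hα => (hSpos α hα).le⟩
  have hTbdd : BddBelow T := ⟨0, fun α hα => hα.1⟩
  have h1S : (1:ℝ) ∈ S := by
    simp only [hSdef, Set.mem_setOf_eq]
    simpa [Real.rpow_one] using hsum
  have h1T : (1:ℝ) ∈ T := by
    refine ⟨zero_le_one, L, hL, 1, one_pos, fun ε hε hε1 => ?_⟩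
    rw [sub_self, Real.rpow_zero, mul_one]
    exact hWle ε
  -- S ⊆ T
  have hST : S ⊆ T := by
    intro α hα
    have hα0 : 0 < α := hSpos α hα
    rcases le_or_gt α 1 with hle | hgt
    · -- Hölder-type bound
      set C : ℝ := ∑' j, l j ^ α with hCdef
      have hC : 0 < C := Summable.tsum_pos hα (fun j => Real.rpow_nonneg (hpos j).le α) 0
        (Real.rpow_pos_of_pos (hpos 0) α)
      refine ⟨hα0.le, C, hC, 1, one_pos, fun ε hε hε1 => ?_⟩
      rw [hW ε]
      have hsub1 : Summable fun j : {j : ℕ // l j ≤ ε} => l j.1 := hsum.subtype _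
      have hsub2 : Summable fun j : {j : ℕ // l j ≤ ε} => l j.1 ^ α := hα.subtype _
      have hpt : ∀ j : {j : ℕ // l j ≤ ε}, l j.1 ≤ l j.1 ^ α * ε ^ (1 - α) := by
        intro j
        have h1 : l j.1 = l j.1 ^ α * l j.1 ^ (1 - α) := by
          rw [← Real.rpow_add (hpos j.1)]
          simp
        nth_rewrite 1 [h1]
        apply mul_le_mul_of_nonneg_left _ (Real.rpow_nonneg (hpos j.1).le α)
        exact Real.rpow_le_rpow (hpos j.1).le j.2 (by linarith)
      calc (∑' j : {j : ℕ // l j ≤ ε}, l j.1)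
          ≤ ∑' j : {j : ℕ // l j ≤ ε}, l j.1 ^ α * ε ^ (1 - α) :=
            Summable.tsum_le_tsum hpt hsub1 (by
              simpa using hsub2.mul_right (ε ^ (1 - α)))
        _ = (∑' j : {j : ℕ // l j ≤ ε}, l j.1 ^ α) * ε ^ (1 - α) := tsum_mul_right
        _ ≤ C * ε ^ (1 - α) := by
            apply mul_le_mul_of_nonneg_right _ (Real.rpow_nonneg hε.le _)
            exact Summable.tsum_subtype_le (fun j => l j ^ α) {j | l j ≤ ε}
              (fun j => Real.rpow_nonneg (hpos j).le α) hα
    · -- α > 1 : trivial bound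
      refine ⟨hα0.le, L, hL, 1, one_pos, fun ε hε hε1 => ?_⟩
      have h1 : (1:ℝ) ≤ ε ^ (1 - α) :=
        Real.one_le_rpow_of_pos_of_le_one_of_nonpos hε hε1.le (by linarith)
      calc W ε ≤ L := hWle ε
        _ = L * 1 := (mul_one L).symm
        _ ≤ L * ε ^ (1 - α) := mul_le_mul_of_nonneg_left h1 hL.le
  apply le_antisymm
  · -- sInf S ≤ sInf T
    apply le_csInf ⟨1, h1T⟩
    intro α hα
    obtain ⟨hα0, C, hC, ε₀, hε₀, hb⟩ := hα
    apply le_of_forall_gt_imp_ge_of_dense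
    intro β hβ
    apply csInf_le hSbdd
    exact key_summable l hpos hl0 α C ε₀ hα0 hC hε₀
      (fun ε hε hεε₀ G hG => le_trans (hfin ε G hG) (hb ε hε hεε₀)) β hβ
  · exact csInf_le_csInf hTbdd ⟨1, h1S⟩ hST
end

section
/- Let (l_j)_{j≥1} be a nonincreasing sequence of positive real numbers with ∑_{j=1}^∞ l_j < ∞, and let N(x) = #{ j ≥ 1 : l_j ≥ 1/x } for x > 0. Define the abscissa of convergence σ = inf{ α ∈ ℝ : ∑_{j=1}^∞ l_j^α < ∞ } and the growth rate D = inf{ α ≥ 0 : N(x) = O(x^α) as x → ∞ }. Then σ = D. -/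
/-!
Markov's inequality for the series `∑ l_j ^ α` gives `N x ≤ (∑ l_j ^ α) * x ^ α`, so every
exponent of convergence is an admissible growth exponent. Conversely, since `l` is nonincreasing,
`N (1 / l_j) ≥ j + 1`; hence `N x = O(x ^ α)` forces `l_j ^ α = O(1 / j)`, and then
`∑ l_j ^ β` converges for every `β > α` by comparison with `∑ j ^ (-β / α)`.
-/

open Filter Topology

lemma natCard_setOf_le_mul_le_tsum {ι : Type*} {f : ι → ℝ} (hf : ∀ i, 0 ≤ f i)
    (hs : Summable f) (t : ℝ) : Nat.card {i | t ≤ f i} * t ≤ ∑' i, f i := by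
  by_cases hfin : {i | t ≤ f i}.Finite
  · rw [Nat.card_coe_set_eq, Set.ncard_eq_toFinset_card _ hfin, ← nsmul_eq_mul,
      ← Finset.sum_const]
    calc ∑ _ ∈ hfin.toFinset, t ≤ ∑ i ∈ hfin.toFinset, f i :=
          Finset.sum_le_sum fun i hi => hfin.mem_toFinset.mp hi
      _ ≤ ∑' i, f i := hs.sum_le_tsum _ fun i _ => hf i
  · rw [Set.Infinite.card_eq_zero hfin, Nat.cast_zero, zero_mul]
    exact tsum_nonneg hf

lemma natCard_setOf_inv_le_le_tsum_mul_rpow {ι : Type*} {l : ι → ℝ} (hpos : ∀ i, 0 < l i)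
    {α : ℝ} (hα : 0 < α) (hs : Summable fun i => l i ^ α) {x : ℝ} (hx : 0 < x) :
    (Nat.card {i | 1 / x ≤ l i} : ℝ) ≤ (∑' i, l i ^ α) * x ^ α := by
  have hset : {i | 1 / x ≤ l i} = {i | (1 / x) ^ α ≤ l i ^ α} := by
    ext i
    exact (Real.rpow_le_rpow_iff (by positivity) (hpos i).le hα).symm
  have hmarkov :=
    natCard_setOf_le_mul_le_tsum (fun i => Real.rpow_nonneg (hpos i).le α) hs ((1 / x) ^ α)
  rwa [← hset, Real.div_rpow zero_le_one hx.le, Real.one_rpow, mul_one_div,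
    div_le_iff₀ (by positivity)] at hmarkov

lemma Filter.Tendsto.finite_setOf_le {ι : Type*} {l : ι → ℝ}
    (hlim : Tendsto l cofinite (𝓝 0)) {t : ℝ} (ht : 0 < t) : {i | t ≤ l i}.Finite := by
  simpa using eventually_cofinite.mp (hlim.eventually (gt_mem_nhds ht))

lemma Antitone.succ_le_natCard_setOf_le {α : Type*} [Preorder α] {l : ℕ → α}
    (hl : Antitone l) {t : α} (hfin : {i | t ≤ l i}.Finite) {j : ℕ} (hj : t ≤ l j) :
    j + 1 ≤ Nat.card {i | t ≤ l i} :=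
  calc j + 1 = Nat.card (Set.Iic j) := by simp
    _ ≤ _ := Nat.card_mono hfin fun _ hi => hj.trans (hl hi)

lemma pos_of_summable_rpow {l : ℕ → ℝ} (hpos : ∀ j, 0 < l j)
    (hlim : Tendsto l atTop (𝓝 0)) {α : ℝ} (hs : Summable fun j => l j ^ α) : 0 < α := by
  by_contra! hα
  obtain ⟨j, hl1, hlα⟩ := ((hlim.eventually (gt_mem_nhds one_pos)).and
    (hs.tendsto_atTop_zero.eventually (gt_mem_nhds one_pos))).exists
  exact hlα.not_ge (Real.one_le_rpow_of_pos_of_le_one_of_nonpos (hpos j) hl1.le hα)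

lemma Antitone.eventually_succ_mul_rpow_le {l : ℕ → ℝ} (hl : Antitone l)
    (hpos : ∀ j, 0 < l j) (hlim : Tendsto l atTop (𝓝 0)) {α C x₀ : ℝ}
    (hb : ∀ x, x₀ < x → (Nat.card {j | 1 / x ≤ l j} : ℝ) ≤ C * x ^ α) :
    ∀ᶠ j : ℕ in atTop, ((j : ℝ) + 1) * l j ^ α ≤ C := by
  have hsmall : ∀ᶠ j in atTop, l j * x₀ < 1 := by
    simpa using (hlim.mul_const x₀).eventually (gt_mem_nhds (by simp : (0 : ℝ) * x₀ < 1))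
  filter_upwards [hsmall] with j hj
  have hbound := hb (1 / l j) (by rw [lt_div_iff₀ (hpos j)]; linarith)
  rw [one_div_one_div, Real.div_rpow zero_le_one (hpos j).le, Real.one_rpow, mul_one_div,
    le_div_iff₀ (Real.rpow_pos_of_pos (hpos j) α)] at hbound
  have hcount := hl.succ_le_natCard_setOf_le
    ((Nat.cofinite_eq_atTop ▸ hlim).finite_setOf_le (hpos j)) le_rfl
  calc ((j : ℝ) + 1) * l j ^ α ≤ Nat.card {i | l j ≤ l i} * l j ^ α :=
        mul_le_mul_of_nonneg_right (by exact_mod_cast hcount)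
          (Real.rpow_nonneg (hpos j).le α)
    _ ≤ C := hbound

lemma summable_rpow_of_eventually_succ_mul_le {g : ℕ → ℝ} (hg : ∀ j, 0 ≤ g j) {C q : ℝ}
    (hq : 1 < q) (h : ∀ᶠ j : ℕ in atTop, ((j : ℝ) + 1) * g j ≤ C) :
    Summable fun j => g j ^ q := by
  obtain ⟨j₀, hj₀⟩ := h.exists
  have hC : 0 ≤ C := (mul_nonneg (by positivity) (hg j₀)).trans hj₀
  have hzeta : Summable fun j : ℕ => C ^ q * ((j : ℝ) + 1) ^ (-q) := by
    have := (summable_nat_add_iff 1).mpr (Real.summable_nat_rpow.mpr (neg_lt_neg hq))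
    exact (by simpa using this : Summable fun j : ℕ => ((j : ℝ) + 1) ^ (-q)).mul_left _
  refine hzeta.of_norm_bounded_eventually_nat ?_
  filter_upwards [h] with j hj
  rw [Real.norm_of_nonneg (Real.rpow_nonneg (hg j) q), Real.rpow_neg (by positivity),
    ← div_eq_mul_inv, ← Real.div_rpow hC (by positivity)]
  exact Real.rpow_le_rpow (hg j) (by rwa [le_div_iff₀' (by positivity)]) (by linarith)

lemma summable_rpow_of_eventually_succ_mul_rpow_le {l : ℕ → ℝ} (hpos : ∀ j, 0 < l j)
    {α β C : ℝ} (hα : 0 ≤ α) (hαβ : α < β)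
    (h : ∀ᶠ j : ℕ in atTop, ((j : ℝ) + 1) * l j ^ α ≤ C) :
    Summable fun j => l j ^ β := by
  have hα : 0 < α := by
    refine hα.lt_of_ne fun hα0 => ?_
    subst hα0
    obtain ⟨j, hjC, hj⟩ := (h.and (tendsto_natCast_atTop_atTop.eventually_gt_atTop C)).exists
    simp only [Real.rpow_zero, mul_one] at hjC
    linarith
  have hpow : (fun j => l j ^ β) = fun j => (l j ^ α) ^ (β / α) := by
    ext j
    rw [← Real.rpow_mul (hpos j).le, mul_div_cancel₀ _ hα.ne']
  rw [hpow]
  exact summable_rpow_of_eventually_succ_mul_le (fun j => Real.rpow_nonneg (hpos j).le α)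
    ((one_lt_div hα).mpr hαβ) h

lemma csInf_eq_csInf_of_subset_of_forall_lt_mem {α : Type*} [ConditionallyCompleteLinearOrder α]
    [DenselyOrdered α] {S T : Set α} (hST : S ⊆ T) (hT : BddBelow T) (hS : S.Nonempty)
    (hTS : ∀ a ∈ T, ∀ b, a < b → b ∈ S) : sInf S = sInf T :=
  le_antisymm
    (le_csInf (hS.mono hST) fun a ha => le_of_forall_gt_imp_ge_of_dense fun b hb =>
      csInf_le (hT.mono hST) (hTS a ha b hb))
    (csInf_le_csInf hT hS hST)

/-- Let `(l_j)` be a nonincreasing summable sequence of positive reals and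
`N(x) = #{j : l_j ≥ 1/x}` the geometric counting function. Then the abscissa of convergence
`σ = inf {α : ∑_j l_j^α < ∞}` equals the growth rate
`D = inf {α ≥ 0 : N(x) = O(x^α) as x → ∞}`. -/
theorem abscissa_eq_growth_rate (l : ℕ → ℝ) (hpos : ∀ j, 0 < l j)
    (hmono : Antitone l) (hsum : Summable l)
    (N : ℝ → ℝ) (hN : ∀ x : ℝ, 0 < x → N x = Nat.card {j : ℕ | 1 / x ≤ l j}) :
    sInf {α : ℝ | Summable fun j => l j ^ α}
      = sInf {α : ℝ | 0 ≤ α ∧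
          ∃ C > (0 : ℝ), ∃ x₀ > (0 : ℝ), ∀ x : ℝ, x₀ < x → N x ≤ C * x ^ α} := by
  have hlim := hsum.tendsto_atTop_zero
  refine csInf_eq_csInf_of_subset_of_forall_lt_mem ?_ ⟨0, fun α hα => hα.1⟩
    ⟨1, by simpa using hsum⟩ ?_
  · intro α hs
    have hα := pos_of_summable_rpow hpos hlim hs
    have hA : 0 ≤ ∑' j, l j ^ α := tsum_nonneg fun j => Real.rpow_nonneg (hpos j).le α
    refine ⟨hα.le, (∑' j, l j ^ α) + 1, by linarith, 1, one_pos, fun x hx => ?_⟩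
    have hx0 : 0 < x := one_pos.trans hx
    rw [hN x hx0]
    calc _ ≤ (∑' j, l j ^ α) * x ^ α := natCard_setOf_inv_le_le_tsum_mul_rpow hpos hα hs hx0
      _ ≤ _ := by gcongr; linarith
  · rintro α ⟨hα, C, -, x₀, hx₀, hb⟩ β hαβ
    have hcount : ∀ x, x₀ < x → (Nat.card {j | 1 / x ≤ l j} : ℝ) ≤ C * x ^ α :=
      fun x hx => hN x (hx₀.trans hx) ▸ hb x hx
    exact summable_rpow_of_eventually_succ_mul_rpow_le hpos hα hαβ
      (hmono.eventually_succ_mul_rpow_le hpos hlim hcount)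
end

section
/- Let p be a prime and let U be a nonempty bounded open subset of ℚ_p. Then U can be written as the union of an at most countable family of pairwise disjoint closed balls B(a_j, p^{−n_j}) (a_j ∈ ℚ_p, n_j ∈ ℤ), each of which is maximal in U, i.e., B(a_j, p^{−n_j}) is not contained in any closed ball B′ with B(a_j, p^{−n_j}) ⊊ B′ ⊆ U. Equivalently, for each x ∈ U the union of all closed balls B with x ∈ B ⊆ U is itself a closed ball (the largest ball centered at x contained in U), and these balls, as x ranges over U, form an at most countable partition of U. -/
/-! In an ultrametric space two closed balls are nested or disjoint, so the maximal closed balls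
inside `U` are pairwise disjoint, and as they are open and nonempty in the separable space `ℚ_[p]`,
there are countably many of them. They cover `U`: around `x ∈ U` the balls of radius `p ^ (-k)`
inside `U` exist since `U` is open and have bounded radii since `U` is bounded, so there is a
largest one; as every distance in `ℚ_[p]` is a power of `p`, no larger ball of any radius fits
in `U`. -/

open Function Metric IsUltrametricDist

section ClosedBallIn

variable {X : Type*} [PseudoMetricSpace X] {U s B B' : Set X}

def IsClosedBallIn (U s : Set X) : Prop :=
  s ⊆ U ∧ ∃ b r, 0 < r ∧ s = closedBall b r

theorem IsClosedBallIn.nonempty (h : IsClosedBallIn U s) : s.Nonempty := by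
  obtain ⟨-, b, r, hr, rfl⟩ := h
  exact nonempty_closedBall.2 hr.le

theorem Maximal.not_ssubset_closedBall_subset (hB : Maximal (IsClosedBallIn U) B) :
    ¬∃ (b : X) (r : ℝ), 0 < r ∧ B ⊂ closedBall b r ∧ closedBall b r ⊆ U := by
  rintro ⟨b, r, hr, hBb, hbU⟩
  exact hB.not_ssuperset ⟨hbU, b, r, hr, rfl⟩ hBb

variable [IsUltrametricDist X]

theorem IsClosedBallIn.isOpen (h : IsClosedBallIn U s) : IsOpen s := by
  obtain ⟨-, b, r, hr, rfl⟩ := h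
  exact isOpen_closedBall b hr.ne'

theorem Maximal.isClosedBallIn_eq_of_not_disjoint (hB : Maximal (IsClosedBallIn U) B)
    (hB' : Maximal (IsClosedBallIn U) B') (hBB' : ¬Disjoint B B') : B = B' := by
  obtain ⟨-, b, r, -, rfl⟩ := hB.prop
  obtain ⟨-, b', r', -, rfl⟩ := hB'.prop
  rcases closedBall_subset_trichotomy b b' r r' with h | h | h
  · exact hB.eq_of_subset hB'.prop h
  · exact (hB'.eq_of_subset hB.prop h).symm
  · exact absurd h hBB'

theorem pairwise_disjoint_maximal_isClosedBallIn :
    Pairwise (Disjoint on fun B : {B : Set X // Maximal (IsClosedBallIn U) B} => B.1) :=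
  fun B B' hne => by_contra fun h =>
    hne (Subtype.ext (B.2.isClosedBallIn_eq_of_not_disjoint B'.2 h))

theorem countable_maximal_isClosedBallIn [TopologicalSpace.SeparableSpace X] :
    Countable {B : Set X // Maximal (IsClosedBallIn U) B} :=
  pairwise_disjoint_maximal_isClosedBallIn.countable_of_isOpen_disjoint
    (fun B => B.2.prop.isOpen) (fun B => B.2.prop.nonempty)

end ClosedBallIn

theorem exists_closedBall_zpow_subset {X : Type*} [PseudoMetricSpace X] {U : Set X} {x : X}
    {c : ℝ} (hc : 1 < c) (hU : IsOpen U) (hx : x ∈ U) : ∃ k : ℤ, closedBall x (c ^ (-k)) ⊆ U := by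
  obtain ⟨ε, hε, hεU⟩ := Metric.isOpen_iff.mp hU x hx
  obtain ⟨N, hN⟩ := exists_pow_lt_of_lt_one hε (inv_lt_one_of_one_lt₀ hc)
  refine ⟨N, (closedBall_subset_ball ?_).trans hεU⟩
  rwa [zpow_neg, zpow_natCast, ← inv_pow]

namespace Padic

variable {p : ℕ} [Fact p.Prime]

theorem zpow_le_of_closedBall_subset {x : ℚ_[p]} {k : ℤ} {R : ℝ}
    (h : closedBall x ((p : ℝ) ^ (-k)) ⊆ closedBall x R) : (p : ℝ) ^ (-k) ≤ R := by
  have hmem : x + (p : ℚ_[p]) ^ k ∈ closedBall x ((p : ℝ) ^ (-k)) := by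
    simp [mem_closedBall, dist_eq_norm]
  simpa [mem_closedBall, dist_eq_norm, norm_p_zpow] using h hmem

theorem exists_lt_closedBall_zpow_subset_of_ssubset {x b : ℚ_[p]} {m : ℤ} {r : ℝ}
    (h : closedBall x ((p : ℝ) ^ (-m)) ⊂ closedBall b r) :
    ∃ k < m, closedBall x ((p : ℝ) ^ (-k)) ⊆ closedBall b r := by
  have hp : (1 : ℝ) < p := by exact_mod_cast (Fact.out : p.Prime).one_lt
  have hpos : 0 < (p : ℝ) ^ (-m) := zpow_pos (by linarith) _
  have hb : closedBall b r = closedBall x r :=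
    closedBall_eq_of_mem (h.1 (mem_closedBall_self hpos.le))
  rw [hb] at h ⊢
  -- a point of the larger ball outside the smaller one sits at distance exactly `p ^ (-k)`, `k < m`
  obtain ⟨y, hyr, hym⟩ := Set.exists_of_ssubset h
  rw [mem_closedBall] at hyr hym
  have hyx : y - x ≠ 0 := fun h0 => hym (by rw [sub_eq_zero.mp h0, dist_self]; exact hpos.le)
  have hdist : dist y x = (p : ℝ) ^ (-(y - x).valuation) := by
    rw [dist_eq_norm, norm_eq_zpow_neg_valuation hyx]
  refine ⟨(y - x).valuation, ?_, closedBall_subset_closedBall (hdist ▸ hyr)⟩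
  have := (zpow_lt_zpow_iff_right₀ hp).mp (hdist ▸ not_le.mp hym)
  omega

theorem exists_maximal_closedBall_zpow {U : Set ℚ_[p]} {x : ℚ_[p]} (hU : IsOpen U)
    (hb : Bornology.IsBounded U) (hx : x ∈ U) :
    ∃ m : ℤ, Maximal (IsClosedBallIn U) (closedBall x ((p : ℝ) ^ (-m))) := by
  have hp : (1 : ℝ) < p := by exact_mod_cast (Fact.out : p.Prime).one_lt
  obtain ⟨R, hR⟩ := hb.subset_closedBall x
  obtain ⟨N, hN⟩ := pow_unbounded_of_one_lt R hp
  have hbdd : ∀ k : ℤ, closedBall x ((p : ℝ) ^ (-k)) ⊆ U → -(N : ℤ) ≤ k := fun k hk => by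
    have := (zpow_lt_zpow_iff_right₀ hp).mp
      ((zpow_le_of_closedBall_subset (hk.trans hR)).trans_lt (by rwa [zpow_natCast]))
    omega
  obtain ⟨m, hmU, hmin⟩ :=
    Int.exists_least_of_bdd ⟨_, hbdd⟩ (exists_closedBall_zpow_subset hp hU hx)
  refine ⟨m, ⟨hmU, x, _, zpow_pos (by linarith) _, rfl⟩, fun B hB hmB => ?_⟩
  obtain ⟨hBU, b, r, -, rfl⟩ := hB
  by_contra hBm
  obtain ⟨k, hkm, hkB⟩ :=
    exists_lt_closedBall_zpow_subset_of_ssubset (hmB.ssubset_of_not_subset hBm)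
  exact (hmin k (hkB.trans hBU)).not_gt hkm

end Padic

theorem padic_open_set_decomposition_general (p : ℕ) [Fact p.Prime]
    (U : Set ℚ_[p]) (hU : IsOpen U) (hb : Bornology.IsBounded U) :
    ∃ (ι : Type) (_ : Countable ι) (a : ι → ℚ_[p]) (n : ι → ℤ),
      (⋃ j, Metric.closedBall (a j) ((p : ℝ) ^ (-n j))) = U
        ∧ (Pairwise fun i j =>
            Disjoint (Metric.closedBall (a i) ((p : ℝ) ^ (-n i)))
              (Metric.closedBall (a j) ((p : ℝ) ^ (-n j))))
        ∧ ∀ j, ¬∃ (b : ℚ_[p]) (r : ℝ), 0 < r ∧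
            Metric.closedBall (a j) ((p : ℝ) ^ (-n j)) ⊂ Metric.closedBall b r ∧
            Metric.closedBall b r ⊆ U := by
  have hcenter (x : ℚ_[p]) (k : ℤ) : x ∈ closedBall x ((p : ℝ) ^ (-k)) :=
    mem_closedBall_self (zpow_nonneg p.cast_nonneg _)
  choose! m hm using fun x (hx : x ∈ U) => Padic.exists_maximal_closedBall_zpow hU hb hx
  -- the balls are indexed by themselves, centred at an arbitrary point
  choose a ha using fun B : {B : Set ℚ_[p] // Maximal (IsClosedBallIn U) B} => B.2.prop.nonempty
  have hball : ∀ B, closedBall (a B) ((p : ℝ) ^ (-m (a B))) = B.1 := fun B =>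
    (hm _ (B.2.prop.1 (ha B))).isClosedBallIn_eq_of_not_disjoint B.2
      (Set.not_disjoint_iff.2 ⟨a B, hcenter _ _, ha B⟩)
  refine ⟨_, countable_maximal_isClosedBallIn, a, fun B => m (a B), ?_, ?_, ?_⟩
  · simp only [hball]
    refine (Set.iUnion_subset fun B => B.2.prop.1).antisymm fun x hx => ?_
    exact Set.mem_iUnion.2 ⟨⟨_, hm x hx⟩, hcenter x _⟩
  · simpa only [hball] using pairwise_disjoint_maximal_isClosedBallIn
  · simpa only [hball] using fun B => B.2.not_ssubset_closedBall_subset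

/-- Every nonempty bounded open subset `U` of `ℚ_p` is the union of an at
most countable family of pairwise disjoint closed balls `B(a_j, p^{-n_j})`, each of which is
maximal in `U`: no closed ball `B'` satisfies `B(a_j, p^{-n_j}) ⊊ B' ⊆ U`. -/
theorem padic_open_set_decomposition (p : ℕ) [Fact p.Prime]
    (U : Set ℚ_[p]) (hne : U.Nonempty) (hU : IsOpen U) (hb : Bornology.IsBounded U) :
    ∃ (ι : Type) (_ : Countable ι) (a : ι → ℚ_[p]) (n : ι → ℤ),
      (⋃ j, Metric.closedBall (a j) ((p : ℝ) ^ (-n j))) = U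
        ∧ (Pairwise fun i j =>
            Disjoint (Metric.closedBall (a i) ((p : ℝ) ^ (-n i)))
              (Metric.closedBall (a j) ((p : ℝ) ^ (-n j))))
        ∧ ∀ j, ¬∃ (b : ℚ_[p]) (r : ℝ), 0 < r ∧
            Metric.closedBall (a j) ((p : ℝ) ^ (-n j)) ⊂ Metric.closedBall b r ∧
            Metric.closedBall b r ⊆ U :=
  padic_open_set_decomposition_general p U hU hb
end

section
/- Let D = log 2 / log 3 and 𝐩 = 2π / log 3. Then for every real ε with 0 < ε ≤ 1/3 such that log_3(1/ε) is not an integer, the symmetric partial sums converge and (1/3) · (2/3)^{⌊log_3(1/ε)⌋} = (1/(6 · log 3)) · lim_{N→∞} ∑_{n=−N}^{N} ε^{1 − D − i n 𝐩} / (1 − D − i n 𝐩), where ε^{1−D−in𝐩} = exp((1 − D − i n 𝐩) · log ε). Equivalently, the left-hand side can be written as ε^{1−D} · G(log_3(1/ε)), where G is the 1-periodic function G(x) = (1/(6 log 3)) ∑_{n∈ℤ} e^{2πinx}/(1 − D − in𝐩). -/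
/-!
Write `ε^s = exp (-x (a - 2πik))` with `x = log₃ (1/ε)` and `a = log (3/2)`, so that the symmetric
sum becomes `log 3 · e^{-ax} ∑ₖ e^{2πikx} / (a - 2πik)`. The coefficients `1 / (a - 2πik)` are the
Fourier coefficients of `e^{at} / (e^a - 1)` on `[0, 1)`, whose periodic extension jumps at the
integers. Subtracting the sawtooth `t - 1/2`, which has the same jump, leaves a continuous function
with absolutely summable coefficients, whose Fourier series converges everywhere. The sawtooth
series `∑ e^{2πiku} / k` converges symmetrically to `log (1 - e^{-2πiu}) - log (1 - e^{2πiu})` by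
Dirichlet's test and Abel's theorem. Together they give `e^{a·fract x} / (e^a - 1)` at non-integer
`x`, and `e^{-a⌊x⌋} = (2/3)^⌊x⌋`.
-/

open Filter Complex ComplexConjugate Finset Topology SummationFilter
open scoped Real

lemma Finset.sum_Icc_neg_eq_add_sum_range {M : Type*} [AddCommGroup M] (f : ℤ → M) (N : ℕ) :
    ∑ k ∈ Icc (-(N : ℤ)) N, f k = f 0 + ∑ n ∈ range N, (f (n + 1) + f (-(n + 1))) := by
  induction N with
  | zero => simp
  | succ N ih => rw [Nat.cast_succ, sum_Icc_succ_eq_add_endpoints, ih, sum_range_succ]; abel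

lemma fourierCoeffOn_sub {a b : ℝ} (hab : a < b) {f g : ℝ → ℂ}
    (hf : IntervalIntegrable f MeasureTheory.volume a b)
    (hg : IntervalIntegrable g MeasureTheory.volume a b) (n : ℤ) :
    fourierCoeffOn hab (f - g) n = fourierCoeffOn hab f n - fourierCoeffOn hab g n := by
  have hfour : ContinuousOn (fun x : ℝ ↦ fourier (-n) (x : AddCircle (b - a))) (Set.uIcc a b) :=
    (by fun_prop : Continuous fun x : ℝ ↦ fourier (-n) (x : AddCircle (b - a))).continuousOn
  simp_rw [fourierCoeffOn_eq_integral, Pi.sub_apply, smul_eq_mul, mul_sub]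
  rw [intervalIntegral.integral_sub (hf.continuousOn_mul hfour) (hg.continuousOn_mul hfour),
    smul_sub]

namespace Complex

lemma norm_sum_range_pow_succ_le {z : ℂ} (hz : ‖z‖ = 1) (h1 : z ≠ 1) (n : ℕ) :
    ‖∑ i ∈ range n, z ^ (i + 1)‖ ≤ 2 / ‖1 - z‖ := by
  have hgeom : ∑ i ∈ range n, z ^ (i + 1) = z * ((z ^ n - 1) / (z - 1)) := by
    simp_rw [← geom_sum_eq h1 n, mul_sum, pow_succ']
  rw [hgeom, norm_mul, hz, one_mul, norm_div, ← norm_neg (z - 1), neg_sub]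
  gcongr
  calc ‖z ^ n - 1‖ ≤ ‖z ^ n‖ + ‖(1 : ℂ)‖ := norm_sub_le _ _
    _ = 2 := by rw [norm_pow, hz]; norm_num

lemma one_sub_mem_slitPlane_of_norm_eq_one {z : ℂ} (hz : ‖z‖ = 1) (h1 : z ≠ 1) :
    1 - z ∈ slitPlane := by
  rw [mem_slitPlane_iff]
  by_contra! h
  have hre : z.re = 1 := le_antisymm (hz ▸ re_le_norm z) (by simpa using h.1)
  exact h1 (ext hre (by simpa using h.2.symm))

theorem tendsto_sum_range_pow_succ_div_of_norm_eq_one {z : ℂ} (hz : ‖z‖ = 1) (h1 : z ≠ 1) :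
    Tendsto (fun N ↦ ∑ n ∈ range N, z ^ (n + 1) / (n + 1)) atTop (𝓝 (-log (1 - z))) := by
  have hcauchy : CauchySeq fun N ↦ ∑ n ∈ range N, ((1 : ℝ) / (n + 1)) • z ^ (n + 1) :=
    Antitone.cauchySeq_series_mul_of_tendsto_zero_of_bounded (fun m n hmn ↦ by gcongr)
      tendsto_one_div_add_atTop_nhds_zero_nat (norm_sum_range_pow_succ_le hz h1)
  obtain ⟨l, hl⟩ := cauchySeq_tendsto_of_complete hcauchy
  have hterm (n : ℕ) : ((1 : ℝ) / (n + 1)) • z ^ (n + 1) = z ^ (n + 1) / (n + 1) := by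
    rw [real_smul]; push_cast; ring
  simp_rw [hterm] at hl
  suffices l = -log (1 - z) by rwa [← this]
  have hshift : Tendsto (fun N ↦ ∑ n ∈ range N, z ^ n / n) atTop (𝓝 l) := by
    rw [← tendsto_add_atTop_iff_nat 1]
    refine hl.congr fun N ↦ ?_
    simp [sum_range_succ']
  have habel := tendsto_map'_iff.mp (tendsto_tsum_powerSeries_nhdsWithin_lt hshift)
  have hcont : ContinuousAt (fun r : ℝ ↦ -log (1 - r * z)) 1 :=
    (ContinuousAt.clog (by fun_prop)
      (by simpa using one_sub_mem_slitPlane_of_norm_eq_one hz h1)).neg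
  have hlim := hcont.tendsto.mono_left (nhdsWithin_le_nhds (s := Set.Iio 1))
  rw [ofReal_one, one_mul] at hlim
  refine tendsto_nhds_unique (habel.congr' ?_) hlim
  filter_upwards [Ioo_mem_nhdsLT zero_lt_one] with r hr
  have hrz : ‖(r : ℂ) * z‖ < 1 := by
    rw [norm_mul, hz, mul_one, norm_real, Real.norm_of_nonneg hr.1.le]
    exact hr.2
  simp only [Function.comp_apply, ← (hasSum_taylorSeries_neg_log hrz).tsum_eq, mul_pow]
  exact tsum_congr fun n ↦ by ring

lemma log_one_sub_sub_log_one_sub_inv {z : ℂ} (hz : ‖z‖ = 1) (h1 : z ≠ 1) :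
    log (1 - z) - log (1 - z⁻¹) = 2 * arg (1 - z) * I := by
  have harg : arg (1 - z) ≠ π :=
    (mem_slitPlane_iff_arg.mp (one_sub_mem_slitPlane_of_norm_eq_one hz h1)).1
  have hconj : 1 - z⁻¹ = conj (1 - z) := by rw [inv_eq_conj hz, map_sub, map_one]
  rw [hconj, log_conj _ harg, sub_conj, log_im]
  push_cast
  ring

lemma one_sub_exp_two_mul_mul_I (θ : ℝ) :
    1 - exp (2 * θ * I) = (2 * Real.sin θ : ℝ) * exp ((θ - π / 2 : ℝ) * I) := by
  have h2 : exp (2 * θ * I) = exp (θ * I) * exp (θ * I) := by rw [← exp_add]; ring_nf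
  have hsin : ((2 * Real.sin θ : ℝ) : ℂ) = (exp (-θ * I) - exp (θ * I)) * I := by
    push_cast [ofReal_sin, sin]
    ring
  have hrot : exp ((θ - π / 2 : ℝ) * I) = exp (θ * I) * -I := by
    rw [← exp_neg_pi_div_two_mul_I, ← exp_add]
    push_cast
    ring_nf
  rw [h2, hsin, hrot, neg_mul, exp_neg]
  have hw : exp (θ * I) ≠ 0 := exp_ne_zero _
  field_simp
  linear_combination (1 - exp (θ * I) ^ 2) * I_sq

lemma arg_one_sub_exp_two_pi_mul_I {u : ℝ} (hu : u ∈ Set.Ioo 0 1) :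
    arg (1 - exp (2 * π * u * I)) = π * u - π / 2 := by
  have hπ := Real.pi_pos
  have hsin : 0 < Real.sin (π * u) :=
    Real.sin_pos_of_pos_of_lt_pi (by nlinarith [hu.1]) (by nlinarith [hu.2])
  rw [show (2 * π * u : ℂ) = 2 * ((π * u : ℝ) : ℂ) by push_cast; ring,
    one_sub_exp_two_mul_mul_I, arg_real_mul _ (by positivity), exp_mul_I]
  exact arg_cos_add_sin_mul_I ⟨by nlinarith [hu.1], by nlinarith [hu.2]⟩

/-- The `k = 0` term is `z ^ 0 / 0 = 0`. -/
theorem hasSum_zpow_div_symmetricIcc {z : ℂ} (hz : ‖z‖ = 1) (h1 : z ≠ 1) :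
    HasSum (fun k : ℤ ↦ z ^ k / k) (-(2 * arg (1 - z) * I)) (symmetricIcc ℤ) := by
  have hinv : ‖z⁻¹‖ = 1 := by rw [norm_inv, hz, inv_one]
  have hlim := (tendsto_sum_range_pow_succ_div_of_norm_eq_one hz h1).sub
    (tendsto_sum_range_pow_succ_div_of_norm_eq_one hinv (inv_ne_one.mpr h1))
  rw [hasSum_symmetricIcc_iff, ← log_one_sub_sub_log_one_sub_inv hz h1, neg_sub,
    ← neg_sub_neg]
  refine hlim.congr fun N ↦ ?_
  rw [sum_Icc_neg_eq_add_sum_range, Int.cast_zero, div_zero, zero_add, ← sum_sub_distrib]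
  refine sum_congr rfl fun n _ ↦ ?_
  have hn : ((n : ℤ) + 1) = ((n + 1 : ℕ) : ℤ) := by push_cast; rfl
  rw [hn, zpow_neg, zpow_natCast, inv_pow]
  push_cast
  rw [div_neg, sub_eq_add_neg]

section FourierSeries

variable {a : ℝ}

lemma exp_ofReal_sub_one_ne_zero (ha : a ≠ 0) : exp (a : ℂ) - 1 ≠ 0 := by
  rw [sub_ne_zero, ← ofReal_exp, ← ofReal_one, Ne, ofReal_inj, Real.exp_eq_one_iff]
  exact ha

lemma ofReal_sub_two_pi_mul_I_ne_zero (ha : a ≠ 0) (n : ℤ) : (a : ℂ) - 2 * π * I * n ≠ 0 :=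
  fun h ↦ ha (by simpa using congrArg re h)

lemma fourierCoeffOn_exp_mul (ha : a ≠ 0) (n : ℤ) :
    fourierCoeffOn zero_lt_one (fun t : ℝ ↦ exp (a * t)) n = (exp a - 1) / (a - 2 * π * I * n) := by
  have hexp (t : ℝ) : fourier (-n) (t : AddCircle (1 - 0 : ℝ)) • exp (a * t) =
      exp ((a - 2 * π * I * n) * t) := by
    rw [fourier_coe_apply, smul_eq_mul, ← exp_add]
    push_cast
    ring_nf
  have hper : exp (a - 2 * π * I * n) = exp a := by
    rw [exp_sub, show 2 * π * I * n = n * (2 * π * I) by ring, exp_int_mul_two_pi_mul_I, div_one]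
  rw [fourierCoeffOn_eq_integral]
  simp_rw [hexp]
  rw [integral_exp_mul_complex (ofReal_sub_two_pi_mul_I_ne_zero ha n), ofReal_one, ofReal_zero,
    mul_one, mul_zero, exp_zero, hper, sub_zero, div_one, one_smul]

lemma fourierCoeffOn_sawtooth (n : ℤ) :
    fourierCoeffOn zero_lt_one (fun t : ℝ ↦ (t : ℂ) - 1 / 2) n = -(1 / (2 * π * I * n)) := by
  have h := bernoulliFourierCoeff_eq one_ne_zero n
  simp only [bernoulliFourierCoeff, bernoulliFun_one] at h
  push_cast at h
  rw [h, Nat.factorial_one, Nat.cast_one, pow_one, neg_div]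

noncomputable def expSubSawtooth (a t : ℝ) : ℂ := exp (a * t) / (exp a - 1) - (t - 1 / 2)

lemma continuous_liftIco_expSubSawtooth (ha : a ≠ 0) :
    Continuous (AddCircle.liftIco 1 0 (expSubSawtooth a)) := by
  refine AddCircle.liftIco_zero_continuous ?_ (by unfold expSubSawtooth; fun_prop)
  have := exp_ofReal_sub_one_ne_zero ha
  simp only [expSubSawtooth, ofReal_zero, ofReal_one, mul_zero, mul_one, exp_zero]
  field_simp
  ring

lemma fourierCoeff_liftIco_expSubSawtooth (ha : a ≠ 0) (n : ℤ) :
    fourierCoeff (AddCircle.liftIco 1 0 (expSubSawtooth a)) n =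
      1 / (a - 2 * π * I * n) + 1 / (2 * π * I * n) := by
  have hexp : fourierCoeffOn zero_lt_one (fun t : ℝ ↦ exp (a * t) / (exp a - 1)) n =
      1 / (a - 2 * π * I * n) := by
    simp_rw [div_eq_inv_mul (exp _)]
    rw [fourierCoeffOn.const_mul, fourierCoeffOn_exp_mul ha, ← div_eq_inv_mul,
      div_div_cancel_left' (exp_ofReal_sub_one_ne_zero ha), one_div]
  have hsplit : expSubSawtooth a =
      (fun t : ℝ ↦ exp (a * t) / (exp a - 1)) - fun t : ℝ ↦ (t : ℂ) - 1 / 2 := rfl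
  rw [fourierCoeff_liftIco_eq]
  simp only [zero_add]
  rw [hsplit, fourierCoeffOn_sub _ ((by fun_prop : Continuous _).intervalIntegrable _ _)
    ((by fun_prop : Continuous _).intervalIntegrable _ _), hexp, fourierCoeffOn_sawtooth,
    sub_neg_eq_add]

lemma summable_one_div_sub_add_one_div (ha : a ≠ 0) :
    Summable fun n : ℤ ↦ 1 / ((a : ℂ) - 2 * π * I * n) + 1 / (2 * π * I * n) := by
  have hπ := Real.pi_pos
  refine Summable.of_norm_bounded_eventually
    ((Real.summable_one_div_int_pow.mpr one_lt_two).mul_left (|a| / (2 * π) ^ 2)) ?_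
  filter_upwards [eventually_cofinite_ne 0] with n hn
  have hn0 : 0 < |(n : ℝ)| := by positivity
  have hlow : 2 * π * |(n : ℝ)| ≤ ‖(a : ℂ) - 2 * π * I * n‖ := by
    simpa [abs_mul, abs_of_pos hπ] using abs_im_le_norm ((a : ℂ) - 2 * π * I * n)
  have hsum : 1 / ((a : ℂ) - 2 * π * I * n) + 1 / (2 * π * I * n) =
      a / (((a : ℂ) - 2 * π * I * n) * (2 * π * I * n)) := by
    have := ofReal_sub_two_pi_mul_I_ne_zero ha n
    field_simp
    ring
  rw [hsum, norm_div, norm_mul, norm_real, Real.norm_eq_abs]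
  calc |a| / (‖(a : ℂ) - 2 * π * I * n‖ * ‖2 * (π : ℂ) * I * n‖)
      ≤ |a| / ((2 * π * |(n : ℝ)|) * (2 * π * |(n : ℝ)|)) := by
        gcongr
        simp [abs_of_pos hπ]
    _ = |a| / (2 * π) ^ 2 * (1 / (n : ℝ) ^ 2) := by
        rw [← sq_abs (n : ℝ)]
        ring

lemma hasSum_fourier_expSubSawtooth (ha : a ≠ 0) {u : ℝ} (hu : u ∈ Set.Ico 0 1) :
    HasSum (fun n : ℤ ↦ exp (2 * π * u * I) ^ n *
      (1 / (a - 2 * π * I * n) + 1 / (2 * π * I * n))) (expSubSawtooth a u) := by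
  let F : C(AddCircle (1 : ℝ), ℂ) := ⟨_, continuous_liftIco_expSubSawtooth ha⟩
  have hcoeff : fourierCoeff F = fun n : ℤ ↦
      1 / ((a : ℂ) - 2 * π * I * n) + 1 / (2 * π * I * n) :=
    funext (fourierCoeff_liftIco_expSubSawtooth ha)
  have hF := has_pointwise_sum_fourier_series_of_summable
    (hcoeff ▸ summable_one_div_sub_add_one_div ha) (u : AddCircle (1 : ℝ))
  have hFu : F u = expSubSawtooth a u :=
    AddCircle.liftIco_coe_apply (f := expSubSawtooth a) (by rwa [zero_add])
  rw [hFu, hcoeff] at hF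
  convert hF using 2 with n
  rw [fourier_coe_apply, ← exp_int_mul, smul_eq_mul, mul_comm]
  congr 2
  push_cast
  ring

theorem hasSum_zpow_div_symmetricIcc_of_mem_Ioo (ha : a ≠ 0) {u : ℝ} (hu : u ∈ Set.Ioo 0 1) :
    HasSum (fun k : ℤ ↦ exp (2 * π * u * I) ^ k / (a - 2 * π * I * k))
      (exp (a * u) / (exp a - 1)) (symmetricIcc ℤ) := by
  set ω := exp (2 * π * u * I)
  have hω : ‖ω‖ = 1 := by rw [norm_exp]; simp
  have hω1 : ω ≠ 1 := by
    rw [Ne, exp_eq_one_iff]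
    rintro ⟨n, hn⟩
    have hun : u = n := by
      have him := congrArg im hn
      simp only [mul_im, mul_re, ofReal_re, ofReal_im, I_re, I_im, re_ofNat, im_ofNat,
        intCast_re, intCast_im] at him
      exact mul_left_cancel₀ Real.two_pi_pos.ne' (by linarith)
    obtain ⟨h0, h1⟩ := hu
    rw [hun] at h0 h1
    norm_cast at h0 h1
    omega
  have hsaw := (hasSum_zpow_div_symmetricIcc hω hω1).mul_left (1 / (2 * π * I))
  have hfour : HasSum _ _ (symmetricIcc ℤ) :=
    (hasSum_fourier_expSubSawtooth ha (Set.Ioo_subset_Ico_self hu)).mono_left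
      (symmetricIcc ℤ).le_atTop
  have hterm : (fun k : ℤ ↦ ω ^ k / (a - 2 * π * I * k)) = fun k : ℤ ↦
      ω ^ k * (1 / (a - 2 * π * I * k) + 1 / (2 * π * I * k)) -
        1 / (2 * π * I) * (ω ^ k / k) := by
    funext k
    ring
  have hval : exp (a * u) / (exp a - 1) =
      expSubSawtooth a u - 1 / (2 * π * I) * -(2 * arg (1 - ω) * I) := by
    have := exp_ofReal_sub_one_ne_zero ha
    have := Real.pi_ne_zero
    rw [arg_one_sub_exp_two_pi_mul_I hu, expSubSawtooth]
    field_simp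
    push_cast
    ring
  rw [hterm, hval]
  exact hfour.sub hsaw

lemma exp_two_pi_mul_fract_mul_I (x : ℝ) :
    exp (2 * π * Int.fract x * I) = exp (2 * π * x * I) := by
  conv_rhs => rw [← Int.floor_add_fract x]
  push_cast
  rw [mul_add, add_mul, exp_add, show 2 * π * ⌊x⌋ * I = ⌊x⌋ * (2 * π * I) by ring,
    exp_int_mul_two_pi_mul_I, one_mul]

lemma ofReal_cpow_sub_two_pi_mul_I_div {ε L x : ℝ} (hε : 0 < ε) (hL : L ≠ 0)
    (hx : Real.log ε = -(L * x)) (k : ℤ) :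
    (ε : ℂ) ^ ((a - 2 * π * I * k) / L) = exp (-(a * x)) * exp (2 * π * x * I) ^ k := by
  rw [cpow_def_of_ne_zero (ofReal_ne_zero.mpr hε.ne'), ← ofReal_log hε.le, hx, ← exp_int_mul,
    ← exp_add]
  have hL' : (L : ℂ) ≠ 0 := ofReal_ne_zero.mpr hL
  congr 1
  push_cast
  field_simp
  ring

theorem hasSum_ofReal_cpow_div_symmetricIcc {ε L : ℝ} (hε : 0 < ε) (hL : L ≠ 0) (ha : a ≠ 0)
    (hx : Int.fract (-Real.log ε / L) ≠ 0) :
    HasSum (fun k : ℤ ↦ (ε : ℂ) ^ ((a - 2 * π * I * k) / L) / ((a - 2 * π * I * k) / L))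
      (L * exp (-a) ^ ⌊-Real.log ε / L⌋ / (exp a - 1)) (symmetricIcc ℤ) := by
  set x := -Real.log ε / L
  have hlog : Real.log ε = -(L * x) := by simp only [x]; field_simp
  have hterm (k : ℤ) :
      (ε : ℂ) ^ ((a - 2 * π * I * k) / L) / ((a - 2 * π * I * k) / L) =
        L * exp (-(a * x)) * (exp (2 * π * Int.fract x * I) ^ k / (a - 2 * π * I * k)) := by
    rw [ofReal_cpow_sub_two_pi_mul_I_div hε hL hlog, exp_two_pi_mul_fract_mul_I,
      div_div_eq_mul_div]
    ring
  have hval : L * exp (-a) ^ ⌊x⌋ / (exp a - 1) =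
      L * exp (-(a * x)) * (exp (a * Int.fract x) / (exp a - 1)) := by
    have hfloor : (x : ℂ) = ⌊x⌋ + (Int.fract x : ℝ) := by
      exact_mod_cast (Int.floor_add_fract x).symm
    rw [← exp_int_mul, mul_div_assoc', mul_assoc, ← exp_add, hfloor]
    ring_nf
  rw [funext hterm, hval]
  exact (hasSum_zpow_div_symmetricIcc_of_mem_Ioo ha
    ⟨(Int.fract_nonneg x).lt_of_ne' hx, Int.fract_lt_one x⟩).mul_left _

end FourierSeries

end Complex

open Filter in
theorem nonarchimedean_cantor_string_tube_formula_general (ε : ℝ) (hε : 0 < ε)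
    (hirr : ¬∃ k : ℤ, Real.logb 3 (1 / ε) = k) :
    Tendsto (fun N : ℕ => (1 / (6 * (Real.log 3 : ℂ))) *
        ∑ k ∈ Finset.Icc (-(N : ℤ)) (N : ℤ),
          (ε : ℂ) ^ ((1 : ℂ) - ((Real.log 2 / Real.log 3 : ℝ) : ℂ)
              - (k : ℂ) * ((2 * Real.pi / Real.log 3 : ℝ) : ℂ) * Complex.I)
            / ((1 : ℂ) - ((Real.log 2 / Real.log 3 : ℝ) : ℂ)
              - (k : ℂ) * ((2 * Real.pi / Real.log 3 : ℝ) : ℂ) * Complex.I))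
      atTop
      (nhds (((1 / 3 : ℝ) * (2 / 3 : ℝ) ^ ⌊Real.logb 3 (1 / ε)⌋ : ℝ) : ℂ)) := by
  have hL : Real.log 3 ≠ 0 := (Real.log_pos (by norm_num)).ne'
  have hL' : (Real.log 3 : ℂ) ≠ 0 := ofReal_ne_zero.mpr hL
  have hx : -Real.log ε / Real.log 3 = Real.logb 3 (1 / ε) := by
    rw [Real.logb, one_div, Real.log_inv, neg_div]
  have hfract : Int.fract (-Real.log ε / Real.log 3) ≠ 0 := by
    rw [hx, Int.fract_ne_zero_iff]
    rintro ⟨k, hk⟩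
    exact hirr ⟨k, hk.symm⟩
  have hs (k : ℤ) : (1 : ℂ) - ((Real.log 2 / Real.log 3 : ℝ) : ℂ)
      - (k : ℂ) * ((2 * π / Real.log 3 : ℝ) : ℂ) * I =
      (Real.log (3 / 2) - 2 * π * I * k) / Real.log 3 := by
    rw [Real.log_div (by norm_num) (by norm_num)]
    push_cast
    field_simp
  have hexp : exp (Real.log (3 / 2) : ℂ) = 3 / 2 := by
    rw [← ofReal_exp, Real.exp_log (by norm_num)]
    norm_num
  have hlim := (hasSum_symmetricIcc_iff.mp (hasSum_ofReal_cpow_div_symmetricIcc hε hL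
    (Real.log_pos (by norm_num : (1 : ℝ) < 3 / 2)).ne' hfract)).const_mul
      (1 / (6 * (Real.log 3 : ℂ)))
  simp_rw [hs, ← hx]
  convert hlim using 2
  rw [exp_neg, hexp]
  push_cast
  field_simp
  norm_num

open Filter in
/-- Let `D = log 2 / log 3` and `𝐩 = 2π / log 3`. For every real `ε` with
`0 < ε ≤ 1/3` such that `log_3(1/ε)` is not an integer, the symmetric partial sums converge
and `(1/3)·(2/3)^{⌊log_3(1/ε)⌋} = (1/(6 log 3)) · lim_{N→∞} ∑_{n=-N}^{N}
ε^{1-D-in𝐩}/(1-D-in𝐩)` (the exact fractal tube formula for the 3-adic Cantor string). -/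
theorem nonarchimedean_cantor_string_tube_formula (ε : ℝ) (hε : 0 < ε) (hε3 : ε ≤ 1 / 3)
    (hirr : ¬∃ k : ℤ, Real.logb 3 (1 / ε) = k) :
    Tendsto (fun N : ℕ => (1 / (6 * (Real.log 3 : ℂ))) *
        ∑ k ∈ Finset.Icc (-(N : ℤ)) (N : ℤ),
          (ε : ℂ) ^ ((1 : ℂ) - ((Real.log 2 / Real.log 3 : ℝ) : ℂ)
              - (k : ℂ) * ((2 * Real.pi / Real.log 3 : ℝ) : ℂ) * Complex.I)
            / ((1 : ℂ) - ((Real.log 2 / Real.log 3 : ℝ) : ℂ)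
              - (k : ℂ) * ((2 * Real.pi / Real.log 3 : ℝ) : ℂ) * Complex.I))
      atTop
      (nhds (((1 / 3 : ℝ) * (2 / 3 : ℝ) ^ ⌊Real.logb 3 (1 / ε)⌋ : ℝ) : ℂ)) :=
  nonarchimedean_cantor_string_tube_formula_general ε hε hirr
end
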